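/- arXiv:1611.06918 — 5 statements merged into one kernel-verified Lean document; each statement's English description precedes it below -/
import Mathlib

section
/- Let k be a finite field of characteristic p, V a finite-dimensional k-vector space, and let H ⊴ G ⊆ GL(V) be subgroups with H normal in G and of finite index in G coprime to p. If H ⊆ GL(V) is adequate+, then G ⊆ GL(V) is adequate+. -/
/-!
Statement 5: If `H ⊴ G ⊆ GL(V)` with `H` normal in `G` of finite index coprime to `p`
(the characteristic of the finite field `k`), and `H` is adequate+, then `G` is adequate+.
-/

universe u

open TensorProduct

/-- A representation `ρ` of a group `G` on a finite dimensional `k`-vector space `V` is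
*adequate+* if:
(1) `Ext¹_{k[G]}(V, V) = 0`, i.e. `H¹(G, End_k(V))` (conjugation action) vanishes;
(2) `H¹(G, k) = 0` (trivial action);
(3) `H²(G, k) = 0` (trivial action);
(4) `End_k(V)` is spanned as a `k`-vector space by the images of the semisimple elements
    of `G`. -/
def IsAdequatePlus {k G V : Type u} [CommRing k] [Group G] [AddCommGroup V] [Module k V]
    (ρ : Representation k G V) : Prop :=
  Subsingleton (groupCohomology (Rep.of (ρ.linHom ρ)) 1) ∧
  Subsingleton (groupCohomology (Rep.trivial k G k) 1) ∧
  Subsingleton (groupCohomology (Rep.trivial k G k) 2) ∧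
  Submodule.span k {f : Module.End k V |
      ∃ g : G, Module.End.IsSemisimple (ρ g) ∧ ρ g = f} = ⊤

/-- The tautological representation of a subgroup of `GL(V)` on `V`. -/
def subgroupRep {k V : Type u} [CommRing k] [AddCommGroup V] [Module k V]
    (G : Subgroup (LinearMap.GeneralLinearGroup k V)) : Representation k G V :=
  (Units.coeHom (V →ₗ[k] V)).comp G.subtype

open groupCohomology in
/-- `H¹(Γ, A) = 0` iff every 1-cocycle is a 1-coboundary. -/
lemma subsingleton_h1_iff {k Γ : Type u} [CommRing k] [Group Γ] (A : Rep k Γ) :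
    Subsingleton (groupCohomology A 1) ↔
      ∀ f : Γ → A, (∀ g h : Γ, f (g * h) = A.ρ g (f h) + f g) →
        ∃ x : A, ∀ g : Γ, A.ρ g x - x = f g := by
  constructor
  · intro hsub f hf
    have hm : f ∈ cocycles₁ A := (mem_cocycles₁_iff f).2 hf
    obtain ⟨x, hx⟩ := (H1π_eq_zero_iff (⟨f, hm⟩ : cocycles₁ A)).1 (Subsingleton.elim _ _)
    exact ⟨x, fun g => congrFun hx g⟩
  · intro h
    refine ⟨fun a b => ?_⟩
    have hz : ∀ c : H1 A, c = 0 := fun c => H1_induction_on c fun f => by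
      obtain ⟨x, hx⟩ := h f.1 ((mem_cocycles₁_iff f.1).1 f.2)
      exact (H1π_eq_zero_iff f).2 ⟨x, funext hx⟩
    rw [hz a, hz b]

open groupCohomology in
/-- `H²(Γ, A) = 0` iff every 2-cocycle is a 2-coboundary. -/
lemma subsingleton_h2_iff {k Γ : Type u} [CommRing k] [Group Γ] (A : Rep k Γ) :
    Subsingleton (groupCohomology A 2) ↔
      ∀ f : Γ × Γ → A, (∀ g h l : Γ, f (g * h, l) + f (g, h) = A.ρ g (f (h, l)) + f (g, h * l)) →
        ∃ x : Γ → A, ∀ g h : Γ, A.ρ g (x h) - x (g * h) + x g = f (g, h) := by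
  constructor
  · intro hsub f hf
    have hm : f ∈ cocycles₂ A := (mem_cocycles₂_iff f).2 hf
    obtain ⟨x, hx⟩ := (H2π_eq_zero_iff (⟨f, hm⟩ : cocycles₂ A)).1 (Subsingleton.elim _ _)
    exact ⟨x, fun g h => congrFun hx (g, h)⟩
  · intro h
    refine ⟨fun a b => ?_⟩
    have hz : ∀ c : H2 A, c = 0 := fun c => H2_induction_on c fun f => by
      obtain ⟨x, hx⟩ := h f.1 ((mem_cocycles₂_iff f.1).1 f.2)
      exact (H2π_eq_zero_iff f).2 ⟨x, funext fun gh => hx gh.1 gh.2⟩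
    rw [hz a, hz b]

/-- Transport of the "every 1-cocycle is a coboundary" property along a group isomorphism
compatible with the representations. -/
lemma transport_h1 {k M Γ₁ Γ₂ : Type u} [CommRing k] [AddCommGroup M] [Module k M]
    [Group Γ₁] [Group Γ₂] (ρ₁ : Representation k Γ₁ M) (ρ₂ : Representation k Γ₂ M)
    (e : Γ₁ ≃* Γ₂) (hcomp : ∀ a : Γ₁, ρ₁ a = ρ₂ (e a))
    (h : ∀ f : Γ₂ → M, (∀ a b : Γ₂, f (a * b) = ρ₂ a (f b) + f a) →
      ∃ x : M, ∀ a : Γ₂, ρ₂ a x - x = f a) :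
    ∀ f : Γ₁ → M, (∀ a b : Γ₁, f (a * b) = ρ₁ a (f b) + f a) →
      ∃ x : M, ∀ a : Γ₁, ρ₁ a x - x = f a := by
  intro f hf
  obtain ⟨x, hx⟩ := h (fun a => f (e.symm a)) (fun a b => by
    show f (e.symm (a * b)) = ρ₂ a (f (e.symm b)) + f (e.symm a)
    rw [map_mul]
    have h1 := hf (e.symm a) (e.symm b)
    rw [hcomp, e.apply_symm_apply] at h1
    exact h1)
  refine ⟨x, fun a => ?_⟩
  have h1 := hx (e a)
  rw [e.symm_apply_apply] at h1
  rw [hcomp]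
  exact h1

/-- Ascent of 1-cocycle triviality from a finite-index subgroup whose index is invertible. -/
lemma ascend_one {k Γ M : Type u} [Field k] [Group Γ] [AddCommGroup M] [Module k M]
    (ρ : Representation k Γ M) (S : Subgroup Γ)
    (hfin : S.index ≠ 0) (hunit : (S.index : k) ≠ 0)
    (hS : ∀ f : S → M, (∀ s t : S, f (s * t) = ρ s (f t) + f s) →
        ∃ x : M, ∀ s : S, ρ s x - x = f s)
    (f : Γ → M) (hf : ∀ g h : Γ, f (g * h) = ρ g (f h) + f g) :
    ∃ x : M, ∀ g : Γ, ρ g x - x = f g := by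
  obtain ⟨x, hx⟩ := hS (fun s => f s) (fun s t => hf s t)
  set f' : Γ → M := fun g => f g - (ρ g x - x) with hf'def
  have hf' : ∀ g h : Γ, f' (g * h) = ρ g (f' h) + f' g := by
    intro g h
    show f (g * h) - (ρ (g * h) x - x) = ρ g (f h - (ρ h x - x)) + (f g - (ρ g x - x))
    rw [hf, map_mul, Module.End.mul_apply, map_sub, map_sub]
    abel
  have h0 : ∀ s : Γ, s ∈ S → f' s = 0 := by
    intro s hs
    have h1 : ρ s x - x = f s := hx ⟨s, hs⟩
    show f s - (ρ s x - x) = 0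
    rw [h1, sub_self]
  have hcoset : ∀ (g s : Γ), s ∈ S → f' (g * s) = f' g := by
    intro g s hs
    rw [hf' g s, h0 s hs, map_zero, zero_add]
  have hconst : ∀ a b : Γ, (a : Γ ⧸ S) = (b : Γ ⧸ S) → f' a = f' b := by
    intro a b hab
    have h1 : a⁻¹ * b ∈ S := QuotientGroup.eq.mp hab
    have h2 : b = a * (a⁻¹ * b) := by group
    rw [h2, hcoset a _ h1]
  haveI : Finite (Γ ⧸ S) := Nat.finite_of_card_ne_zero hfin
  haveI : Fintype (Γ ⧸ S) := Fintype.ofFinite _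
  set y : M := ∑ q : Γ ⧸ S, f' q.out with hy
  have key : ∀ g : Γ, y = ρ g y + (S.index : k) • f' g := by
    intro g
    have step : ∀ q : Γ ⧸ S, f' (g • q).out = ρ g (f' q.out) + f' g := by
      intro q
      have h1 : f' (g • q).out = f' (g * q.out) := by
        apply hconst
        rw [QuotientGroup.out_eq', ← smul_eq_mul, MulAction.Quotient.mk_smul_out]
      rw [h1, hf' g q.out]
    have h2 : ∑ q : Γ ⧸ S, f' (g • q).out = y :=
      Fintype.sum_equiv (MulAction.toPerm g) _ _ (fun q => rfl)
    calc y = ∑ q : Γ ⧸ S, f' (g • q).out := h2.symm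
      _ = ∑ q : Γ ⧸ S, (ρ g (f' q.out) + f' g) := Finset.sum_congr rfl (fun q _ => step q)
      _ = ρ g y + (S.index : k) • f' g := by
          rw [Finset.sum_add_distrib, ← map_sum, Finset.sum_const, Finset.card_univ,
            ← Nat.card_eq_fintype_card, Nat.cast_smul_eq_nsmul]
          rfl
  refine ⟨x + (-(S.index : k)⁻¹) • y, ?_⟩
  intro g
  have h2 : (S.index : k) • f' g = y - ρ g y := eq_sub_of_add_eq' (key g).symm
  have h3 : f' g = (S.index : k)⁻¹ • y - (S.index : k)⁻¹ • ρ g y := by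
    rw [← smul_sub, ← h2, smul_smul, inv_mul_cancel₀ hunit, one_smul]
  have expand : f g = f' g + (ρ g x - x) := by
    show f g = f g - (ρ g x - x) + (ρ g x - x)
    abel
  rw [map_add, map_smul, expand, h3, neg_smul, neg_smul]
  abel

/-- Ascent of 2-cocycle triviality (trivial coefficients) from a normal subgroup of finite
index invertible in the coefficient field, given also vanishing of `H¹` of the subgroup. -/
lemma ascend_two {k Γ M : Type u} [Field k] [Group Γ] [AddCommGroup M] [Module k M]
    (S : Subgroup Γ) (hnorm : S.Normal) (hfin : S.index ≠ 0) (hunit : (S.index : k) ≠ 0)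
    (h1S : ∀ c : S → M, (∀ s t : S, c (s * t) = c t + c s) → ∀ s : S, c s = 0)
    (h2S : ∀ c : S × S → M, (∀ s t u : S, c (s * t, u) + c (s, t) = c (t, u) + c (s, t * u)) →
        ∃ v : S → M, ∀ s t : S, v t - v (s * t) + v s = c (s, t))
    (f : Γ × Γ → M) (hf : ∀ g h l : Γ, f (g * h, l) + f (g, h) = f (h, l) + f (g, h * l)) :
    ∃ u : Γ → M, ∀ g h : Γ, u h - u (g * h) + u g = f (g, h) := by
  classical
  obtain ⟨v, hv⟩ := h2S (fun st => f (st.1, st.2)) (fun s t u => hf s t u)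
  set u₁ : Γ → M := fun g => if hg : g ∈ S then v ⟨g, hg⟩ else 0 with hu₁
  set f₁ : Γ × Γ → M := fun gh => f gh - (u₁ gh.2 - u₁ (gh.1 * gh.2) + u₁ gh.1) with hf₁def
  have hf₁ : ∀ g h l : Γ, f₁ (g * h, l) + f₁ (g, h) = f₁ (h, l) + f₁ (g, h * l) := by
    intro g h l
    show f (g * h, l) - (u₁ l - u₁ (g * h * l) + u₁ (g * h))
        + (f (g, h) - (u₁ h - u₁ (g * h) + u₁ g))
      = f (h, l) - (u₁ l - u₁ (h * l) + u₁ h)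
        + (f (g, h * l) - (u₁ (h * l) - u₁ (g * (h * l)) + u₁ g))
    rw [mul_assoc g h l, sub_add_sub_comm, hf g h l]
    abel
  have hS₁ : ∀ (s t : Γ), s ∈ S → t ∈ S → f₁ (s, t) = 0 := by
    intro s t hs ht
    show f (s, t) - (u₁ t - u₁ (s * t) + u₁ s) = 0
    have hst : s * t ∈ S := mul_mem hs ht
    have hv' : v ⟨t, ht⟩ - v ⟨s * t, hst⟩ + v ⟨s, hs⟩ = f (s, t) := hv ⟨s, hs⟩ ⟨t, ht⟩
    rw [hu₁]
    simp only [dif_pos hs, dif_pos ht, dif_pos hst]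
    rw [← hv']
    abel
  have star : ∀ (g s : Γ), s ∈ S → f₁ (s, g) = f₁ (g, g⁻¹ * s * g) := by
    intro g s hs
    have hc := h1S (fun σ : S => f₁ (σ, g) - f₁ (g, g⁻¹ * σ * g)) ?_ ⟨s, hs⟩
    · exact sub_eq_zero.mp hc
    intro σ τ
    have ha : (σ : Γ) ∈ S := σ.2
    have hb : (τ : Γ) ∈ S := τ.2
    show f₁ ((σ : Γ) * τ, g) - f₁ (g, g⁻¹ * ((σ : Γ) * τ) * g)
      = (f₁ (τ, g) - f₁ (g, g⁻¹ * τ * g)) + (f₁ (σ, g) - f₁ (g, g⁻¹ * σ * g))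
    set a := (σ : Γ)
    set b := (τ : Γ)
    have e1 := hf₁ a b g
    rw [hS₁ a b ha hb, add_zero] at e1
    have e2 := hf₁ a g (g⁻¹ * b * g)
    rw [show g * (g⁻¹ * b * g) = b * g from by group] at e2
    have e3 := hf₁ g (g⁻¹ * a * g) (g⁻¹ * b * g)
    have hma : g⁻¹ * a * g ∈ S := by simpa using hnorm.conj_mem a ha g⁻¹
    have hmb : g⁻¹ * b * g ∈ S := by simpa using hnorm.conj_mem b hb g⁻¹
    rw [show g * (g⁻¹ * a * g) = a * g from by group,
      show g⁻¹ * a * g * (g⁻¹ * b * g) = g⁻¹ * (a * b) * g from by group,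
      hS₁ _ _ hma hmb, zero_add] at e3
    have e2' : f₁ (a, b * g) = f₁ (a * g, g⁻¹ * b * g) + f₁ (a, g) - f₁ (g, g⁻¹ * b * g) := by
      rw [e2]; abel
    rw [e1, ← e3, e2']
    abel
  set R : Γ → Γ := fun g => (QuotientGroup.mk g : Γ ⧸ S).out with hR
  have hRmem : ∀ g : Γ, (R g)⁻¹ * g ∈ S := by
    intro g
    rw [← QuotientGroup.eq]
    exact QuotientGroup.out_eq' _
  set u₂ : Γ → M := fun g => -f₁ (R g, (R g)⁻¹ * g) with hu₂
  have B1 : ∀ (g s : Γ), s ∈ S → u₂ (g * s) = u₂ g - f₁ (g, s) := by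
    intro g s hs
    have hRgs : R (g * s) = R g := by
      show (QuotientGroup.mk (g * s) : Γ ⧸ S).out = (QuotientGroup.mk g : Γ ⧸ S).out
      rw [QuotientGroup.mk_mul_of_mem g hs]
    have e := hf₁ (R g) ((R g)⁻¹ * g) s
    rw [show R g * ((R g)⁻¹ * g) = g from by group, hS₁ _ _ (hRmem g) hs, zero_add] at e
    show -f₁ (R (g * s), (R (g * s))⁻¹ * (g * s)) = -f₁ (R g, (R g)⁻¹ * g) - f₁ (g, s)
    rw [hRgs, show (R g)⁻¹ * (g * s) = (R g)⁻¹ * g * s from by group, ← e]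
    abel
  set f₂ : Γ × Γ → M := fun gh => f₁ gh - (u₂ gh.2 - u₂ (gh.1 * gh.2) + u₂ gh.1) with hf₂def
  have hf₂ : ∀ g h l : Γ, f₂ (g * h, l) + f₂ (g, h) = f₂ (h, l) + f₂ (g, h * l) := by
    intro g h l
    show f₁ (g * h, l) - (u₂ l - u₂ (g * h * l) + u₂ (g * h))
        + (f₁ (g, h) - (u₂ h - u₂ (g * h) + u₂ g))
      = f₁ (h, l) - (u₂ l - u₂ (h * l) + u₂ h)
        + (f₁ (g, h * l) - (u₂ (h * l) - u₂ (g * (h * l)) + u₂ g))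
    rw [mul_assoc g h l, sub_add_sub_comm, hf₁ g h l]
    abel
  have invR : ∀ (g h s : Γ), s ∈ S → f₂ (g, h * s) = f₂ (g, h) := by
    intro g h s hs
    have e := hf₁ g h s
    have e' : f₁ (g, h * s) = f₁ (g * h, s) + f₁ (g, h) - f₁ (h, s) := by rw [e]; abel
    show f₁ (g, h * s) - (u₂ (h * s) - u₂ (g * (h * s)) + u₂ g)
      = f₁ (g, h) - (u₂ h - u₂ (g * h) + u₂ g)
    rw [e', B1 h s hs, show g * (h * s) = g * h * s from (mul_assoc g h s).symm, B1 (g * h) s hs]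
    abel
  have invL : ∀ (g h s : Γ), s ∈ S → f₂ (g * s, h) = f₂ (g, h) := by
    intro g h s hs
    have ht : h⁻¹ * s * h ∈ S := by simpa using hnorm.conj_mem s hs h⁻¹
    have e1 := hf₁ g s h
    have e2 := hf₁ g h (h⁻¹ * s * h)
    rw [show h * (h⁻¹ * s * h) = s * h from by group] at e2
    have hsh := star h s hs
    have e1' : f₁ (g * s, h) = f₁ (s, h) + f₁ (g, s * h) - f₁ (g, s) := by rw [← e1]; abel
    have e2' : f₁ (g, s * h) = f₁ (g * h, h⁻¹ * s * h) + f₁ (g, h) - f₁ (h, h⁻¹ * s * h) := by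
      rw [e2]; abel
    have e3 : f₁ (g * s, h) = f₁ (g, h) + f₁ (g * h, h⁻¹ * s * h) - f₁ (g, s) := by
      rw [e1', e2', hsh]; abel
    show f₁ (g * s, h) - (u₂ h - u₂ (g * s * h) + u₂ (g * s))
      = f₁ (g, h) - (u₂ h - u₂ (g * h) + u₂ g)
    rw [e3, B1 g s hs, show g * s * h = g * h * (h⁻¹ * s * h) from by group, B1 (g * h) _ ht]
    abel
  haveI : Finite (Γ ⧸ S) := Nat.finite_of_card_ne_zero hfin
  haveI : Fintype (Γ ⧸ S) := Fintype.ofFinite _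
  set w : Γ → M := fun g => ∑ q : Γ ⧸ S, f₂ (g, q.out) with hw
  have hcoset2 : ∀ (g a b : Γ), (a : Γ ⧸ S) = (b : Γ ⧸ S) → f₂ (g, a) = f₂ (g, b) := by
    intro g a b hab
    have h1 : a⁻¹ * b ∈ S := QuotientGroup.eq.mp hab
    have h2 := invR g a (a⁻¹ * b) h1
    rw [show a * (a⁻¹ * b) = b from by group] at h2
    exact h2.symm
  have key : ∀ g h : Γ, Nat.card (Γ ⧸ S) • f₂ (g, h) = w h - w (g * h) + w g := by
    intro g h
    have reind : ∑ q : Γ ⧸ S, f₂ (g, h * q.out) = w g := by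
      have h1 : ∀ q : Γ ⧸ S, f₂ (g, h * q.out) = f₂ (g, (h • q).out) := by
        intro q
        apply hcoset2
        rw [QuotientGroup.out_eq', ← smul_eq_mul, MulAction.Quotient.mk_smul_out]
      rw [Finset.sum_congr rfl (fun q _ => h1 q)]
      exact Fintype.sum_equiv (MulAction.toPerm h) _ _ (fun q => rfl)
    have hsum : (∑ q : Γ ⧸ S, (f₂ (g * h, q.out) + f₂ (g, h)))
        = ∑ q : Γ ⧸ S, (f₂ (h, q.out) + f₂ (g, h * q.out)) :=
      Finset.sum_congr rfl fun q _ => hf₂ g h q.out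
    rw [Finset.sum_add_distrib, Finset.sum_add_distrib, Finset.sum_const, reind,
      Finset.card_univ, ← Nat.card_eq_fintype_card] at hsum
    have hsum' : w (g * h) + Nat.card (Γ ⧸ S) • f₂ (g, h) = w h + w g := hsum
    calc Nat.card (Γ ⧸ S) • f₂ (g, h)
        = w (g * h) + Nat.card (Γ ⧸ S) • f₂ (g, h) - w (g * h) := by abel
      _ = w h + w g - w (g * h) := by rw [hsum']
      _ = w h - w (g * h) + w g := by abel
  refine ⟨fun g => u₁ g + u₂ g + (S.index : k)⁻¹ • w g, ?_⟩
  intro g h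
  have hk : (S.index : k) • f₂ (g, h) = w h - w (g * h) + w g := by
    rw [Nat.cast_smul_eq_nsmul]; exact key g h
  have hf₂' : f₂ (g, h) = (S.index : k)⁻¹ • w h - (S.index : k)⁻¹ • w (g * h)
      + (S.index : k)⁻¹ • w g := by
    calc f₂ (g, h) = (S.index : k)⁻¹ • ((S.index : k) • f₂ (g, h)) := by
          rw [smul_smul, inv_mul_cancel₀ hunit, one_smul]
      _ = (S.index : k)⁻¹ • (w h - w (g * h) + w g) := by rw [hk]
      _ = _ := by rw [smul_add, smul_sub]
  have expand : f (g, h) = f₂ (g, h) + (u₂ h - u₂ (g * h) + u₂ g)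
      + (u₁ h - u₁ (g * h) + u₁ g) := by
    show f (g, h) = f (g, h) - (u₁ h - u₁ (g * h) + u₁ g) - (u₂ h - u₂ (g * h) + u₂ g)
      + (u₂ h - u₂ (g * h) + u₂ g) + (u₁ h - u₁ (g * h) + u₁ g)
    abel
  show u₁ h + u₂ h + (S.index : k)⁻¹ • w h
      - (u₁ (g * h) + u₂ (g * h) + (S.index : k)⁻¹ • w (g * h))
    + (u₁ g + u₂ g + (S.index : k)⁻¹ • w g) = f (g, h)
  rw [expand, hf₂']
  abel

/-- **Lemma (adequate+ ascends along prime-to-p index).** -/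
theorem adequatePlus_of_normal_of_coprime_index (p : ℕ) [Fact p.Prime]
    (k V : Type u) [Field k] [Fintype k] [CharP k p]
    [AddCommGroup V] [Module k V] [FiniteDimensional k V]
    (H G : Subgroup (LinearMap.GeneralLinearGroup k V))
    (hHG : H ≤ G) (hnorm : (H.subgroupOf G).Normal)
    (hfin : H.relIndex G ≠ 0) (hcop : Nat.Coprime (H.relIndex G) p)
    (hH : IsAdequatePlus (subgroupRep H)) :
    IsAdequatePlus (subgroupRep G) := by
  obtain ⟨hH1, hH2, hH3, hH4⟩ := hH
  set S : Subgroup ↥G := H.subgroupOf G with hSdef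
  have hSfin : S.index ≠ 0 := hfin
  have hpdvd : ¬ p ∣ S.index := by
    intro hdvd
    have h1 : p ∣ Nat.gcd (H.relIndex G) p := Nat.dvd_gcd hdvd dvd_rfl
    rw [hcop] at h1
    exact (Fact.out : p.Prime).one_lt.ne' (Nat.dvd_one.mp h1)
  have hunit : ((S.index : k)) ≠ 0 := by
    rw [Ne, CharP.cast_eq_zero_iff k p]
    exact hpdvd
  set e : ↥S ≃* ↥H := Subgroup.subgroupOfEquivOfLe hHG with hedef
  refine ⟨?_, ?_, ?_, ?_⟩
  · -- H¹(G, End V) = 0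
    rw [subsingleton_h1_iff]
    intro f hf
    refine ascend_one (Rep.of ((subgroupRep G).linHom (subgroupRep G))).ρ S hSfin hunit ?_ f hf
    have hcomp : ∀ a : ↥S,
        (Rep.of ((subgroupRep G).linHom (subgroupRep G))).ρ.comp S.subtype a
        = (Rep.of ((subgroupRep H).linHom (subgroupRep H))).ρ (e a) := fun a => rfl
    exact transport_h1 ((Rep.of ((subgroupRep G).linHom (subgroupRep G))).ρ.comp S.subtype)
      (Rep.of ((subgroupRep H).linHom (subgroupRep H))).ρ e hcomp
      ((subsingleton_h1_iff _).1 hH1)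
  · -- H¹(G, k) = 0
    rw [subsingleton_h1_iff]
    intro f hf
    refine ascend_one (Rep.trivial k ↥G k).ρ S hSfin hunit ?_ f hf
    have hcomp : ∀ a : ↥S,
        (Rep.trivial k ↥G k).ρ.comp S.subtype a = (Rep.trivial k ↥H k).ρ (e a) := fun a => rfl
    exact transport_h1 ((Rep.trivial k ↥G k).ρ.comp S.subtype)
      (Rep.trivial k ↥H k).ρ e hcomp ((subsingleton_h1_iff _).1 hH2)
  · -- H²(G, k) = 0
    rw [subsingleton_h2_iff]
    intro f hf
    have hf' : ∀ g h l : ↥G, f (g * h, l) + f (g, h) = f (h, l) + f (g, h * l) := by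
      intro g h l
      have := hf g h l
      rwa [Rep.trivial_ρ] at this
    have h1S : ∀ c : ↥S → k, (∀ s t : ↥S, c (s * t) = c t + c s) → ∀ s : ↥S, c s = 0 := by
      intro c hc s
      obtain ⟨x, hx⟩ := (subsingleton_h1_iff (Rep.trivial k ↥H k)).1 hH2
        (fun a => c (e.symm a)) (fun a b => by
          show c (e.symm (a * b)) = c (e.symm b) + c (e.symm a)
          rw [map_mul]
          exact hc (e.symm a) (e.symm b))
      have h1 : x - x = c (e.symm (e s)) := hx (e s)
      rw [e.symm_apply_apply] at h1
      exact h1.symm.trans (sub_self x)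
    have h2S : ∀ c : ↥S × ↥S → k,
        (∀ s t u : ↥S, c (s * t, u) + c (s, t) = c (t, u) + c (s, t * u)) →
        ∃ v : ↥S → k, ∀ s t : ↥S, v t - v (s * t) + v s = c (s, t) := by
      intro c hc
      obtain ⟨x, hx⟩ := (subsingleton_h2_iff (Rep.trivial k ↥H k)).1 hH3
        (fun ab => c (e.symm ab.1, e.symm ab.2)) (fun a b l => by
          show c (e.symm (a * b), e.symm l) + c (e.symm a, e.symm b)
            = c (e.symm b, e.symm l) + c (e.symm a, e.symm (b * l))
          rw [map_mul, map_mul]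
          exact hc (e.symm a) (e.symm b) (e.symm l))
      refine ⟨fun s => x (e s), fun s t => ?_⟩
      have h1 : x (e t) - x (e s * e t) + x (e s) = c (e.symm (e s), e.symm (e t)) :=
        hx (e s) (e t)
      rw [← map_mul, e.symm_apply_apply, e.symm_apply_apply] at h1
      exact h1
    obtain ⟨u, hu⟩ := ascend_two S hnorm hSfin hunit h1S h2S f hf'
    refine ⟨u, fun g h => ?_⟩
    show u h - u (g * h) + u g = f (g, h)
    exact hu g h
  · -- spanning by semisimple elements
    apply top_unique
    rw [← hH4]
    apply Submodule.span_le.2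
    intro x hx
    obtain ⟨g, hss, heq⟩ := hx
    apply Submodule.subset_span
    exact ⟨⟨(g : LinearMap.GeneralLinearGroup k V), hHG g.2⟩, hss, heq⟩
end

section
/- Let k be a finite field of characteristic p, V a finite-dimensional k-vector space, and H ⊆ GL(V) a finite subgroup of order coprime to p such that V is absolutely irreducible as a representation of H (i.e., for every field extension K of k, the K[H]-module V ⊗_k K is irreducible). Then H ⊆ GL(V) is adequate+. -/
/-!
Statement 6: If `H ⊆ GL(V)` is a finite subgroup of order coprime to `p = char k` such
that `V` is absolutely irreducible as a representation of `H` (i.e. `K ⊗_k V` is a simple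
`K[H]`-module for every field extension `K/k`), then `H` is adequate+.
-/

universe u

open TensorProduct

/-- The base change of a representation along a field extension `K/k`. -/
noncomputable def baseChangeRep {k G V : Type u} [CommRing k] [Monoid G] [AddCommGroup V]
    [Module k V] (ρ : Representation k G V) (K : Type u) [CommRing K] [Algebra k K] :
    Representation K G (K ⊗[k] V) :=
  (Module.End.baseChangeHom k K V).toRingHom.toMonoidHom.comp ρ

/-- A representation is *absolutely irreducible* if all of its base changes to field
extensions are simple modules over the corresponding group algebra. -/
def IsAbsolutelyIrreducible {k G V : Type u} [Field k] [Monoid G] [AddCommGroup V]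
    [Module k V] (ρ : Representation k G V) : Prop :=
  ∀ (K : Type u) (_ : Field K) (_ : Algebra k K),
    IsSimpleModule (MonoidAlgebra K G) (baseChangeRep ρ K).asModule

section AuxCohomology

open groupCohomology


theorem aux_subsingleton_H1 {k G : Type u} [CommRing k] [Group G] [Fintype G]
    (hcard : IsUnit ((Fintype.card G : k))) (A : Rep k G) :
    Subsingleton (groupCohomology A 1) := by
  obtain ⟨c, hc⟩ := hcard.exists_left_inv
  have h : ∀ f : cocycles₁ A, (f : G → A) ∈ coboundaries₁ A := by
    intro f
    suffices hh : ∃ x : A, ∀ g : G, A.ρ g x - x = (f : G → A) g by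
      obtain ⟨x, hx⟩ := hh
      exact ⟨x, funext hx⟩
    set S : A := ∑ h : G, (f : G → A) h with hS
    refine ⟨-(c • S), fun g => ?_⟩
    have hf : ∀ g h : G, (f : G → A) (g * h) = A.ρ g (f h) + f g :=
      (mem_cocycles₁_iff (f : G → A)).1 f.2
    have key : S - A.ρ g S = (Fintype.card G : k) • f g := by
      have h1 : ∑ h : G, (f : G → A) (g * h) = S := Equiv.sum_comp (Equiv.mulLeft g) _
      have h2 : ∑ h : G, (f : G → A) (g * h)
          = A.ρ g S + (Fintype.card G : k) • f g := by
        rw [hS, map_sum, Nat.cast_smul_eq_nsmul]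
        simp [hf g, Finset.sum_add_distrib, Finset.card_univ]
      exact sub_eq_of_eq_add' (h1.symm.trans h2)
    calc A.ρ g (-(c • S)) - -(c • S)
        = c • (S - A.ρ g S) := by rw [map_neg, map_smul]; module
      _ = f g := by rw [key, smul_smul, hc, one_smul]
  have hz : ∀ a : H1 A, a = 0 := fun a =>
    H1_induction_on a fun x => (H1π_eq_zero_iff x).2 (h x)
  exact ⟨fun a b => (hz a).trans (hz b).symm⟩

theorem aux_subsingleton_H2 {k G : Type u} [CommRing k] [Group G] [Fintype G]
    (hcard : IsUnit ((Fintype.card G : k))) (A : Rep k G) :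
    Subsingleton (groupCohomology A 2) := by
  obtain ⟨c, hc⟩ := hcard.exists_left_inv
  have h : ∀ f : cocycles₂ A, (f : G × G → A) ∈ coboundaries₂ A := by
    intro f
    suffices hh : ∃ x : G → A, ∀ g h : G,
        A.ρ g (x h) - x (g * h) + x g = (f : G × G → A) (g, h) by
      obtain ⟨x, hx⟩ := hh
      exact ⟨x, funext fun gh => hx gh.1 gh.2⟩
    set S : G → A := fun g => ∑ j : G, (f : G × G → A) (g, j) with hS
    refine ⟨fun g => c • S g, fun g h => ?_⟩
    have hf : ∀ g h j : G, (f : G × G → A) (g * h, j) + f (g, h)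
        = A.ρ g (f (h, j)) + f (g, h * j) :=
      (mem_cocycles₂_iff (f : G × G → A)).1 f.2
    have key : A.ρ g (S h) - S (g * h) + S g = (Fintype.card G : k) • f (g, h) := by
      have h1 : ∑ j : G, ((f : G × G → A) (g * h, j) + f (g, h))
          = S (g * h) + (Fintype.card G : k) • f (g, h) := by
        rw [Nat.cast_smul_eq_nsmul]
        simp [hS, Finset.sum_add_distrib, Finset.card_univ]
      have h2 : ∑ j : G, ((f : G × G → A) (g * h, j) + f (g, h))
          = A.ρ g (S h) + S g := by
        have h3 : ∑ j : G, (f : G × G → A) (g, h * j) = S g :=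
          Equiv.sum_comp (Equiv.mulLeft h) (fun j => (f : G × G → A) (g, j))
        simp only [hf g h, Finset.sum_add_distrib, h3, hS, map_sum]
      have hEq : S (g * h) + (Fintype.card G : k) • f (g, h) = A.ρ g (S h) + S g :=
        h1.symm.trans h2
      rw [sub_add_eq_add_sub, ← hEq]
      abel
    calc A.ρ g (c • S h) - c • S (g * h) + c • S g
        = c • (A.ρ g (S h) - S (g * h) + S g) := by rw [map_smul]; module
      _ = f (g, h) := by rw [key, smul_smul, hc, one_smul]
  have hz : ∀ a : H2 A, a = 0 := fun a =>
    H2_induction_on a fun x => (H2π_eq_zero_iff x).2 (h x)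
  exact ⟨fun a b => (hz a).trans (hz b).symm⟩

end AuxCohomology

section Burnside

open Module

variable {K : Type u} [Field K] {G : Type u} [Group G] [Fintype G]
variable {U : Type u} [AddCommGroup U] [Module K U]
variable (σ : Representation K G U)

omit [Fintype G] in
/-- The `K`-scalar action on `σ.asModule` agrees with that on `U`. -/
theorem algebraMap_smul_asModule (c : K) (m : σ.asModule) :
    (algebraMap K (MonoidAlgebra K G) c) • m = c • (σ.asModuleEquiv m) := by
  show σ.asAlgebraHom (algebraMap K (MonoidAlgebra K G) c) m = _
  rw [AlgHom.commutes]
  rfl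

omit [Fintype G] in
/-- Schur: an endomorphism of a simple module is a scalar (alg. closed, fin. dim.). -/
theorem schur_scalar [IsAlgClosed K] [FiniteDimensional K U]
    (hs : IsSimpleModule (MonoidAlgebra K G) σ.asModule)
    (ψ : σ.asModule →ₗ[MonoidAlgebra K G] σ.asModule) :
    ∃ c : K, ∀ m : σ.asModule, ψ m = c • (σ.asModuleEquiv m) := by
  haveI := hs
  have hnt : Nontrivial σ.asModule := IsSimpleModule.nontrivial (MonoidAlgebra K G) σ.asModule
  have hnt' : Nontrivial U := hnt
  -- ψ as a K-linear endomorphism of U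
  let ψ' : U →ₗ[K] U :=
    { toFun := fun u => σ.asModuleEquiv (ψ (σ.asModuleEquiv.symm u))
      map_add' := fun x y => by simp [map_add]
      map_smul' := fun c x => by
        have := ψ.map_smul (algebraMap K (MonoidAlgebra K G) c) (σ.asModuleEquiv.symm x)
        simp only [algebraMap_smul_asModule] at this
        exact this }
  obtain ⟨μ, hμ⟩ := Module.End.exists_eigenvalue ψ'
  obtain ⟨v, hv⟩ := hμ.exists_hasEigenvector
  -- the scalar map μ as a MonoidAlgebra-linear endomorphism
  let sc : σ.asModule →ₗ[MonoidAlgebra K G] σ.asModule :=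
    { toFun := fun m => (algebraMap K (MonoidAlgebra K G) μ) • m
      map_add' := fun x y => smul_add _ x y
      map_smul' := fun r m => by
        simp only [RingHom.id_apply, smul_smul, Algebra.commutes μ r] }
  have hker : LinearMap.ker (ψ - sc) = ⊤ := by
    rcases hs.1.2 (LinearMap.ker (ψ - sc)) with h | h
    · exfalso
      have hvmem : (σ.asModuleEquiv.symm v) ∈ LinearMap.ker (ψ - sc) := by
        rw [LinearMap.mem_ker, LinearMap.sub_apply, sub_eq_zero]
        show ψ (σ.asModuleEquiv.symm v)
          = (algebraMap K (MonoidAlgebra K G) μ) • (σ.asModuleEquiv.symm v)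
        apply σ.asModuleEquiv.injective
        rw [algebraMap_smul_asModule, LinearEquiv.apply_symm_apply]
        exact hv.apply_eq_smul
      rw [h, Submodule.mem_bot] at hvmem
      exact hv.2 (by simpa using congrArg σ.asModuleEquiv hvmem)
    · exact h
  refine ⟨μ, fun m => ?_⟩
  have : (ψ - sc) m = 0 := by
    rw [← LinearMap.mem_ker, hker]; trivial
  rw [LinearMap.sub_apply, sub_eq_zero] at this
  rw [this]
  show (algebraMap K (MonoidAlgebra K G) μ) • m = _
  rw [algebraMap_smul_asModule]


theorem burnside_surjective [IsAlgClosed K] [FiniteDimensional K U]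
    (hcard : (Fintype.card G : K) ≠ 0)
    (hs : IsSimpleModule (MonoidAlgebra K G) σ.asModule)
    (f : U →ₗ[K] U) : ∃ r : MonoidAlgebra K G, σ.asAlgebraHom r = f := by
  haveI : NeZero (Fintype.card G : K) := ⟨hcard⟩
  haveI := hs
  classical
  set R := MonoidAlgebra K G with hR
  set n := finrank K U with hn
  set b : Basis (Fin n) K U := finBasis K U with hb
  set v : (Fin n → σ.asModule) := fun i => σ.asModuleEquiv.symm (b i) with hv
  have hvmem : v ∈ Submodule.span R {v} := Submodule.mem_span_singleton_self v
  obtain ⟨N', hN'⟩ := exists_isCompl (Submodule.span R {v})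
  set π : (Fin n → σ.asModule) →ₗ[R] (Fin n → σ.asModule) :=
    (Submodule.span R {v}).subtype.comp
      (Submodule.linearProjOfIsCompl _ N' hN') with hπ
  set F : (Fin n → σ.asModule) → (Fin n → σ.asModule) :=
    fun x j => σ.asModuleEquiv.symm (f (σ.asModuleEquiv (x j))) with hF
  -- the commutation of `F` with any `R`-linear endomorphism
  have comm : ∀ (φ : (Fin n → σ.asModule) →ₗ[R] (Fin n → σ.asModule))
      (x : Fin n → σ.asModule) (i : Fin n),
      f (σ.asModuleEquiv (φ x i)) = σ.asModuleEquiv (φ (F x) i) := by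
    intro φ
    choose c hc using fun (i j : Fin n) =>
      schur_scalar σ hs ((LinearMap.proj i).comp
        (φ.comp (LinearMap.single R (fun _ => σ.asModule) j)))
    have hφ : ∀ (x : Fin n → σ.asModule) (i : Fin n),
        σ.asModuleEquiv (φ x i) = ∑ j, c i j • σ.asModuleEquiv (x j) := by
      intro x i
      conv_lhs => rw [← Finset.univ_sum_single x, map_sum]
      rw [Finset.sum_apply, map_sum]
      refine Finset.sum_congr rfl fun j _ => ?_
      have := hc i j (x j)
      exact this
    intro x i
    rw [hφ, hφ, map_sum]
    refine Finset.sum_congr rfl fun j _ => ?_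
    rw [map_smul]
    simp [hF]
  have hπv : π v = v :=
    congrArg Subtype.val (Submodule.linearProjOfIsCompl_apply_left hN' ⟨v, hvmem⟩)
  have hFv : F v ∈ Submodule.span R {v} := by
    have h1 : F v = π (F v) := by
      funext i
      apply σ.asModuleEquiv.symm.injective
      have h2 := comm π v i
      rw [hπv] at h2
      have h3 : f (σ.asModuleEquiv (v i)) = σ.asModuleEquiv (F v i) := by simp [hF]
      rw [h3] at h2
      simp at h2; rw [h2]
    rw [h1, hπ]
    exact Submodule.coe_mem _
  obtain ⟨r, hr⟩ := Submodule.mem_span_singleton.1 hFv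
  refine ⟨r, b.ext fun i => ?_⟩
  have h4 := congrArg (fun (x : Fin n → σ.asModule) => σ.asModuleEquiv (x i)) hr
  rw [show ((r • v) i : σ.asModule) = r • (v i) from rfl] at h4
  rw [Representation.asModuleEquiv_map_smul] at h4
  simpa [hF, hv] using h4

theorem burnside_span [IsAlgClosed K] [FiniteDimensional K U]
    (hcard : (Fintype.card G : K) ≠ 0)
    (hs : IsSimpleModule (MonoidAlgebra K G) σ.asModule) :
    Submodule.span K (Set.range (σ : G → U →ₗ[K] U)) = ⊤ := by
  rw [Submodule.eq_top_iff']
  intro f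
  obtain ⟨r, hr⟩ := burnside_surjective σ hcard hs f
  rw [← hr, Representation.asAlgebraHom_def, MonoidAlgebra.lift_apply]
  refine Submodule.finsuppSum_mem _ _ _ _ fun g _ => ?_
  exact Submodule.smul_mem _ _ (Submodule.subset_span ⟨g, rfl⟩)

end Burnside

open Module

/-- **Lemma (prime-to-p absolutely irreducible groups are adequate+).** -/
theorem adequatePlus_of_coprime_card_of_absolutelyIrreducible (p : ℕ) [Fact p.Prime]
    (k V : Type u) [Field k] [Fintype k] [CharP k p]
    [AddCommGroup V] [Module k V] [FiniteDimensional k V]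
    (H : Subgroup (LinearMap.GeneralLinearGroup k V)) [Finite H]
    (hcop : Nat.Coprime (Nat.card H) p)
    (hirr : IsAbsolutelyIrreducible (subgroupRep H)) :
    IsAdequatePlus (subgroupRep H) := by
  classical
  haveI : Fintype H := Fintype.ofFinite H
  set ρ : Representation k H V := subgroupRep H with hρ
  have hpndvd : ¬ p ∣ Nat.card H := by
    intro hdvd
    exact (Fact.out : p.Prime).one_lt.ne'
      ((Nat.Coprime.symm hcop).eq_one_of_dvd hdvd)
  have hcardk : ((Fintype.card H : k)) ≠ 0 := by
    rw [← Nat.card_eq_fintype_card]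
    intro h0
    exact hpndvd ((CharP.cast_eq_zero_iff k p _).1 h0)
  have hcard : IsUnit ((Fintype.card H : k)) := IsUnit.mk0 _ hcardk
  -- all elements act semisimply
  have hss : ∀ g : H, Module.End.IsSemisimple (ρ g) := by
    intro g
    have hord : (ρ g) ^ (orderOf g) = 1 := by
      rw [← map_pow, pow_orderOf_eq_one g, map_one]
    refine Module.End.isSemisimple_of_squarefree_aeval_eq_zero
      (p := Polynomial.X ^ (orderOf g) - 1) ?_ ?_
    · refine (Polynomial.X_pow_sub_one_separable_iff.2 ?_).squarefree
      intro h0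
      refine hpndvd (dvd_trans ?_ (orderOf_dvd_natCard g))
      exact (CharP.cast_eq_zero_iff k p _).1 h0
    · rw [map_sub, map_pow, Polynomial.aeval_X, map_one, hord, sub_self]
  refine ⟨aux_subsingleton_H1 hcard _, aux_subsingleton_H1 hcard _,
    aux_subsingleton_H2 hcard _, ?_⟩
  have hset : {f : Module.End k V | ∃ g : H, Module.End.IsSemisimple (ρ g) ∧ ρ g = f}
      = Set.range (ρ : H → Module.End k V) := by
    ext f
    constructor
    · rintro ⟨g, _, rfl⟩; exact ⟨g, rfl⟩
    · rintro ⟨g, rfl⟩; exact ⟨g, hss g, rfl⟩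
  rw [hset]
  -- base change to the algebraic closure
  set K := AlgebraicClosure k with hK
  set σ : Representation K H (K ⊗[k] V) := baseChangeRep ρ K with hσ
  have hsimp : IsSimpleModule (MonoidAlgebra K H) σ.asModule := hirr K _ _
  have hcardK : ((Fintype.card H : K)) ≠ 0 := by
    intro h0
    apply hcardk
    apply (algebraMap k K).injective
    rw [map_natCast, h0, map_zero]
  have hKspan := burnside_span σ hcardK hsimp
  -- descent
  set W := Submodule.span k (Set.range (ρ : H → Module.End k V)) with hWdef
  show W = ⊤
  set m := finrank k W with hm
  set bW : Basis (Fin m) k W := finBasis k W with hbW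
  set w : Fin m → Module.End k V := fun i => (bW i : Module.End k V) with hw
  have hW : Submodule.span k (Set.range w) = W := by
    have h1 := congrArg (Submodule.map W.subtype) bW.span_eq
    rwa [Submodule.map_span, ← Set.range_comp, Submodule.map_top, Submodule.range_subtype] at h1
  set φ := Module.End.baseChangeHom k K V with hφ
  have key : ∀ x ∈ Submodule.span k (Set.range w),
      φ x ∈ Submodule.span K (Set.range (fun i => φ (w i))) := by
    intro x hx
    induction hx using Submodule.span_induction with
    | mem y hy =>
        obtain ⟨i, rfl⟩ := hy
        exact Submodule.subset_span ⟨i, rfl⟩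
    | zero => rw [show φ 0 = 0 from φ.toLinearMap.map_zero]; exact Submodule.zero_mem _
    | add a b _ _ ha hb =>
        rw [show φ (a + b) = φ a + φ b from φ.toLinearMap.map_add a b]
        exact Submodule.add_mem _ ha hb
    | smul c a _ ha =>
        rw [show φ (c • a) = c • φ a from φ.toLinearMap.map_smul c a,
          ← algebraMap_smul K c (φ a)]
        exact Submodule.smul_mem _ _ ha
  have hsub2 : Submodule.span K (Set.range (σ : H → Module.End K (K ⊗[k] V)))
      ≤ Submodule.span K (Set.range (fun i => φ (w i))) := by
    rw [Submodule.span_le]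
    rintro _ ⟨g, rfl⟩
    exact key (ρ g) (hW ▸ Submodule.subset_span ⟨g, rfl⟩)
  have htop : Submodule.span K (Set.range (fun i => φ (w i))) = ⊤ :=
    eq_top_iff.2 (hKspan ▸ hsub2)
  have hle1 : finrank K (Submodule.span K (Set.range (fun i => φ (w i)))) ≤ m := by
    simpa [Set.finrank] using finrank_range_le_card (fun i => φ (w i))
  have hd : finrank K (Module.End K (K ⊗[k] V)) = finrank k V * finrank k V := by
    rw [Module.finrank_linearMap, Module.finrank_baseChange]
  have h1 : finrank k V * finrank k V ≤ m := by
    calc finrank k V * finrank k V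
        = finrank K (Module.End K (K ⊗[k] V)) := hd.symm
      _ = finrank K (⊤ : Submodule K (Module.End K (K ⊗[k] V))) := (finrank_top _ _).symm
      _ = finrank K (Submodule.span K (Set.range (fun i => φ (w i)))) := by rw [htop]
      _ ≤ m := hle1
  have hEnd : finrank k (Module.End k V) = finrank k V * finrank k V :=
    Module.finrank_linearMap k k V V
  have h2 : m ≤ finrank k (Module.End k V) := Submodule.finrank_le W
  have h3 : m = finrank k (Module.End k V) := by rw [hEnd]; omega
  exact Submodule.eq_top_of_finrank_eq h3
end

section
/- Let n ≥ 2 be an integer, ℓ a prime number, and w ≥ k ≥ 1 integers with k dividing w, so that 𝔽_{ℓ^k} is a subfield of 𝔽_{ℓ^w}. Let S denote the image of SL_n(𝔽_{ℓ^k}) in GL_n(𝔽_{ℓ^w}) under the inclusion of matrix groups induced by the field inclusion, and let G be any subgroup of GL_n(𝔽_{ℓ^w}) with S ⊆ G ⊆ N_{GL_n(𝔽_{ℓ^w})}(S), the normaliser of S in GL_n(𝔽_{ℓ^w}). Then the index [G : S] is coprime to ℓ. -/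
/-!
Statement 7: Let `n ≥ 2`, `ℓ` prime, `1 ≤ k ∣ w`, and let `K ⊆ E` be finite fields with
`|K| = ℓ^k` and `|E| = ℓ^w`.  Let `S` be the image of `SL_n(K)` in `GL_n(E)` and let `G`
be any subgroup with `S ⊆ G ⊆ N_{GL_n(E)}(S)`.  Then the index `[G : S]` is coprime
to `ℓ`.
-/

/-- The image of `SL_n(K)` in `GL_n(E)` under a field embedding `K → E` (here the
algebra-structure map). -/
noncomputable def slImage (n : ℕ) (K E : Type) [Field K] [Field E] [Algebra K E] :
    Subgroup (Matrix.GeneralLinearGroup (Fin n) E) :=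
  (Matrix.SpecialLinearGroup.toGL.comp
    (Matrix.SpecialLinearGroup.map (algebraMap K E))).range

open Matrix

section Aux

variable {n : ℕ} {K E : Type} [Field K] [Field E] [Algebra K E]

lemma entries_mem_of_mem_slImage {x : Matrix.GeneralLinearGroup (Fin n) E}
    (hx : x ∈ slImage n K E) (i j : Fin n) :
    (x : Matrix (Fin n) (Fin n) E) i j ∈ (algebraMap K E).range := by
  obtain ⟨s, rfl⟩ := hx
  exact ⟨s.1 i j, rfl⟩

lemma mem_slImage_of {u : Matrix.GeneralLinearGroup (Fin n) E}
    (h : ∀ i j, (u : Matrix (Fin n) (Fin n) E) i j ∈ (algebraMap K E).range)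
    (hdet : (u : Matrix (Fin n) (Fin n) E).det = 1) :
    u ∈ slImage n K E := by
  choose A hA using h
  have hmap : (algebraMap K E).mapMatrix (Matrix.of A) = (u : Matrix (Fin n) (Fin n) E) := by
    ext i j
    exact hA i j
  have hdetA : (Matrix.of A).det = 1 := by
    have h1 : ((algebraMap K E).mapMatrix (Matrix.of A)).det = 1 := by rw [hmap, hdet]
    rw [← RingHom.map_det] at h1
    exact (algebraMap K E).injective (h1.trans ((algebraMap K E).map_one).symm)
  refine ⟨⟨Matrix.of A, hdetA⟩, ?_⟩
  apply Units.ext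
  exact hmap

lemma transvection_mem_slImage {i j : Fin n} (hij : i ≠ j) :
    ∃ x ∈ slImage n K E,
      (x : Matrix (Fin n) (Fin n) E) = transvection i j (1 : E) := by
  refine ⟨Matrix.SpecialLinearGroup.toGL
    (Matrix.SpecialLinearGroup.map (algebraMap K E)
      ⟨transvection i j (1 : K), det_transvection_of_ne i j hij (1 : K)⟩),
    ⟨_, rfl⟩, ?_⟩
  show (algebraMap K E).mapMatrix (transvection i j (1 : K)) = _
  ext a b
  simp [transvection, RingHom.mapMatrix_apply, Matrix.map_apply, Matrix.one_apply,
    single, apply_ite (algebraMap K E)]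

lemma middle_entry (U V : Matrix (Fin n) (Fin n) E) (i j s t : Fin n) :
    (U * single i j (1 : E) * V) s t = U s i * V j t := by
  simp [mul_apply, single, ite_and, mul_comm]

lemma one_entry_mem (s t : Fin n) :
    ((1 : Matrix (Fin n) (Fin n) E)) s t ∈ (algebraMap K E).range := by
  rcases eq_or_ne s t with rfl | hst
  · simp
  · simp [Matrix.one_apply, hst]

lemma pow_entries_mem {A : Matrix (Fin n) (Fin n) E}
    (h : ∀ s t, A s t ∈ (algebraMap K E).range) (N : ℕ) :
    ∀ s t, (A ^ N) s t ∈ (algebraMap K E).range := by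
  induction N with
  | zero =>
    intro s t
    rw [pow_zero]
    exact one_entry_mem s t
  | succ N ih =>
    intro s t
    rw [pow_succ, mul_apply]
    exact Subring.sum_mem _ fun b _ => Subring.mul_mem _ (ih s b) (h b t)

end Aux

section Key

variable {n : ℕ} {ℓ k w : ℕ} {K E : Type} [Field K] [Field E] [Algebra K E]
  [Fintype K] [Fintype E]

lemma charP_E (hℓ : ℓ.Prime) (hw : 1 ≤ w) (hcardE : Fintype.card E = ℓ ^ w) :
    CharP E ℓ := by
  obtain ⟨p, hpc⟩ := CharP.exists E
  haveI := hpc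
  have hp : p.Prime := CharP.char_is_prime E p
  obtain ⟨m, hm, hcard⟩ := FiniteField.card E p
  rw [hcardE] at hcard
  have : p = ℓ := by
    have hdvd : p ∣ ℓ ^ w := by
      refine ⟨p ^ ((m : ℕ) - 1), ?_⟩
      have hm1 : (m : ℕ) - 1 + 1 = (m : ℕ) := Nat.succ_pred_eq_of_pos m.2
      rw [hcard, ← pow_succ', hm1]
    exact (Nat.prime_dvd_prime_iff_eq hp hℓ).mp (Nat.Prime.dvd_of_dvd_pow hp hdvd)
  rwa [this] at hpc

lemma mem_range_of_pow_card (hℓ : ℓ.Prime) (hk : 1 ≤ k)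
    (hcardK : Fintype.card K = ℓ ^ k) {x : E} (hx : x ^ ℓ ^ k = x) :
    x ∈ (algebraMap K E).range := by
  classical
  set q := ℓ ^ k with hq
  have hq1 : 1 < q := Nat.one_lt_pow (by omega) hℓ.one_lt
  set f : Polynomial E := Polynomial.X ^ q - Polynomial.X with hf
  have hfne : f ≠ 0 := FiniteField.X_pow_card_sub_X_ne_zero E hq1
  have hdeg : f.natDegree = q := FiniteField.X_pow_card_sub_X_natDegree_eq E hq1
  have hroot : ∀ y : E, y ^ q = y → f.IsRoot y := by
    intro y hy
    simp [hf, Polynomial.IsRoot, hy, sub_eq_zero]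
  by_contra hxK
  have hsub : insert x ((Finset.univ : Finset K).image (algebraMap K E)) ⊆
      f.roots.toFinset := by
    intro y hy
    rw [Multiset.mem_toFinset, Polynomial.mem_roots hfne]
    rcases Finset.mem_insert.mp hy with rfl | hy
    · exact hroot y hx
    · obtain ⟨z, _, rfl⟩ := Finset.mem_image.mp hy
      apply hroot
      have hz : z ^ q = z := by rw [← hcardK]; exact FiniteField.pow_card z
      rw [← map_pow, hz]
  have hx' : x ∉ (Finset.univ : Finset K).image (algebraMap K E) := by
    intro hmem
    obtain ⟨z, _, rfl⟩ := Finset.mem_image.mp hmem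
    exact hxK ⟨z, rfl⟩
  have hcard1 : ((Finset.univ : Finset K).image (algebraMap K E)).card = q := by
    rw [Finset.card_image_of_injective _ (algebraMap K E).injective,
      Finset.card_univ, hcardK]
  have hle : q + 1 ≤ f.roots.toFinset.card := by
    calc q + 1 = (insert x ((Finset.univ : Finset K).image (algebraMap K E))).card := by
          rw [Finset.card_insert_of_notMem hx', hcard1]
      _ ≤ f.roots.toFinset.card := Finset.card_le_card hsub
  have : f.roots.toFinset.card ≤ q := by
    calc f.roots.toFinset.card ≤ Multiset.card f.roots := Multiset.toFinset_card_le _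
      _ ≤ f.natDegree := Polynomial.card_roots' f
      _ = q := hdeg
  omega

lemma ell_element_mem (hn : 2 ≤ n) (hℓ : ℓ.Prime) (hk : 1 ≤ k) (hwk : k ≤ w)
    (hcardK : Fintype.card K = ℓ ^ k) (hcardE : Fintype.card E = ℓ ^ w)
    (u : Matrix.GeneralLinearGroup (Fin n) E)
    (hu : u ∈ Subgroup.normalizer (slImage n K E : Set (Matrix.GeneralLinearGroup (Fin n) E))) (m : ℕ) (hum : u ^ ℓ ^ m = 1) :
    u ∈ slImage n K E := by
  classical
  haveI : Fact ℓ.Prime := ⟨hℓ⟩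
  haveI : CharP E ℓ := charP_E hℓ (le_trans hk hwk) hcardE
  haveI : Nontrivial (Fin n) := Fin.nontrivial_iff_two_le.mpr hn
  set Kr : Subring E := (algebraMap K E).range with hKr
  set U : Matrix (Fin n) (Fin n) E := (u : Matrix (Fin n) (Fin n) E) with hU
  set V : Matrix (Fin n) (Fin n) E := ((u⁻¹ : Matrix.GeneralLinearGroup (Fin n) E) :
    Matrix (Fin n) (Fin n) E) with hV
  have hUV : U * V = 1 := by
    rw [hU, hV, ← Units.val_mul, mul_inv_cancel, Units.val_one]
  have hVU : V * U = 1 := by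
    rw [hU, hV, ← Units.val_mul, inv_mul_cancel, Units.val_one]
  -- conjugates of off-diagonal matrix units have entries in Kr
  have hconj : ∀ i j : Fin n, i ≠ j → ∀ s t : Fin n,
      (U * single i j (1 : E) * V) s t ∈ Kr := by
    intro i j hij s t
    obtain ⟨x, hxmem, hxcoe⟩ := transvection_mem_slImage (K := K) (E := E) hij
    have hg : u * x * u⁻¹ ∈ slImage n K E := by
      exact (Subgroup.mem_normalizer_iff.mp hu x).mp hxmem
    have hent := entries_mem_of_mem_slImage hg s t
    have hcoe : ((u * x * u⁻¹ : Matrix.GeneralLinearGroup (Fin n) E) :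
        Matrix (Fin n) (Fin n) E) = 1 + U * single i j (1 : E) * V := by
      rw [hU, hV, Units.val_mul, Units.val_mul, hxcoe, transvection, mul_add,
        mul_one, add_mul, ← hU, ← hV, hUV]
    have : (U * single i j (1 : E) * V) s t
        = ((u * x * u⁻¹ : Matrix.GeneralLinearGroup (Fin n) E) :
            Matrix (Fin n) (Fin n) E) s t - (1 : Matrix (Fin n) (Fin n) E) s t := by
      rw [hcoe]
      simp [Matrix.add_apply]
    rw [this]
    exact Subring.sub_mem _ hent (one_entry_mem s t)
  -- all conjugates of matrix units
  have hconj' : ∀ i j s t : Fin n, (U * single i j (1 : E) * V) s t ∈ Kr := by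
    intro i j s t
    rcases eq_or_ne i j with rfl | hij
    · obtain ⟨p, hp⟩ := exists_ne i
      have hsplit : U * single i i (1 : E) * V
          = (U * single i p (1 : E) * V) * (U * single p i (1 : E) * V) := by
        have : single i i (1 : E)
            = single i p (1 : E) * single p i (1 : E) := by
          rw [single_mul_single_same, one_mul]
        rw [this,
          show (U * single i p (1 : E) * V) * (U * single p i (1 : E) * V)
            = U * single i p (1 : E) * (V * U) * (single p i (1 : E) * V) by
              noncomm_ring,
          hVU, mul_one]
        noncomm_ring
      rw [hsplit, mul_apply]
      exact Subring.sum_mem _ fun b _ =>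
        Subring.mul_mem _ (hconj i p hp.symm s b) (hconj p i hp b t)
    · exact hconj i j hij s t
  -- a nonzero entry of V
  have hn0 : 0 < n := by omega
  set i0 : Fin n := ⟨0, hn0⟩ with hi0
  have hVne : ∃ j t : Fin n, V j t ≠ 0 := by
    by_contra h
    push_neg at h
    have hV0 : V = 0 := by ext a b; exact h a b
    rw [hV0, Matrix.mul_zero] at hUV
    have h00 : (0 : Matrix (Fin n) (Fin n) E) i0 i0 = (1 : Matrix (Fin n) (Fin n) E) i0 i0 := by
      rw [hUV]
    simp at h00
  obtain ⟨j, t, hμ⟩ := hVne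
  set μ : E := V j t with hμdef
  -- μ • U has entries in Kr
  have hb : ∀ s i : Fin n, (μ • U) s i ∈ Kr := by
    intro s i
    have := hconj' i j s t
    rw [middle_entry] at this
    have heq : (μ • U) s i = U s i * V j t := by
      simp [Matrix.smul_apply, mul_comm, hμdef]
    rwa [heq]
  set N : ℕ := ℓ ^ m with hN
  have hN0 : N ≠ 0 := (pow_pos hℓ.pos m).ne'
  have hUN : U ^ N = 1 := by
    rw [hU, hN, ← Units.val_pow_eq_pow_val, hum, Units.val_one]
  -- μ ^ N ∈ Kr
  have hμN : μ ^ N ∈ Kr := by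
    have hpow : (μ • U) ^ N = μ ^ N • (1 : Matrix (Fin n) (Fin n) E) := by
      rw [smul_pow, hUN]
    have := pow_entries_mem (K := K) hb N i0 i0
    rw [hpow] at this
    simpa [hKr] using this
  -- Frobenius argument: μ ∈ Kr
  have hμK : μ ∈ Kr := by
    apply mem_range_of_pow_card hℓ hk hcardK
    have hfix : (μ ^ N) ^ ℓ ^ k = μ ^ N := by
      obtain ⟨z, hz⟩ := hμN
      rw [← hz, ← map_pow]
      congr 1
      rw [← hcardK]
      exact FiniteField.pow_card z
    have : (μ ^ ℓ ^ k - μ) ^ N = 0 := by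
      rw [hN, sub_pow_char_pow]
      rw [← pow_mul, mul_comm (ℓ ^ k), pow_mul]
      rw [← hN, hfix, sub_self]
    have h0 : μ ^ ℓ ^ k - μ = 0 := pow_eq_zero_iff hN0 |>.mp this
    linear_combination h0
  -- entries of U are in Kr
  have hUent : ∀ s i : Fin n, U s i ∈ Kr := by
    intro s i
    have hμinv : μ⁻¹ ∈ Kr := by
      obtain ⟨z, hz⟩ := hμK
      exact ⟨z⁻¹, by rw [map_inv₀, hz]⟩
    have : U s i = μ⁻¹ * ((μ • U) s i) := by
      rw [Matrix.smul_apply, smul_eq_mul, ← mul_assoc, inv_mul_cancel₀ hμ, one_mul]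
    rw [this]
    exact Subring.mul_mem _ hμinv (hb s i)
  -- det U = 1
  have hdet : U.det = 1 := by
    have hdN : U.det ^ N = 1 := by rw [← Matrix.det_pow, hUN, Matrix.det_one]
    have : (U.det - 1) ^ N = 0 := by
      rw [hN, sub_pow_char_pow, one_pow, ← hN, hdN, sub_self]
    have h0 : U.det - 1 = 0 := pow_eq_zero_iff hN0 |>.mp this
    linear_combination h0
  exact mem_slImage_of hUent hdet

end Key

theorem index_coprime_of_between_SL_and_normalizer
    (n : ℕ) (hn : 2 ≤ n) (ℓ : ℕ) (hℓ : ℓ.Prime)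
    (k w : ℕ) (hk : 1 ≤ k) (hkw : k ∣ w) (hwk : k ≤ w)
    (K E : Type) [Field K] [Field E] [Algebra K E] [Fintype K] [Fintype E]
    (hcardK : Fintype.card K = ℓ ^ k) (hcardE : Fintype.card E = ℓ ^ w)
    (G : Subgroup (Matrix.GeneralLinearGroup (Fin n) E))
    (hSG : slImage n K E ≤ G) (hGN : G ≤ Subgroup.normalizer (slImage n K E : Set (Matrix.GeneralLinearGroup (Fin n) E))) :
    Nat.Coprime ((slImage n K E).relIndex G) ℓ := by
  classical
  haveI : Fact ℓ.Prime := ⟨hℓ⟩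
  haveI : Finite (Matrix.GeneralLinearGroup (Fin n) E) := by
    unfold Matrix.GeneralLinearGroup
    infer_instance
  obtain ⟨P⟩ : Nonempty (Sylow ℓ G) := inferInstance
  have hPS : (P : Subgroup G) ≤ (slImage n K E).subgroupOf G := by
    intro x hx
    obtain ⟨m, hm⟩ := P.2 ⟨x, hx⟩
    have hx1 : x ^ ℓ ^ m = 1 := by
      have := congrArg Subtype.val hm
      simpa using this
    have hx2 : (x : Matrix.GeneralLinearGroup (Fin n) E) ^ ℓ ^ m = 1 := by
      have := congrArg Subtype.val hx1
      simpa using this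
    exact Subgroup.mem_subgroupOf.mpr
      (ell_element_mem hn hℓ hk hwk hcardK hcardE _ (hGN x.2) m hx2)
  have h1 : ((slImage n K E).subgroupOf G).index ∣ (P : Subgroup G).index :=
    Subgroup.index_dvd_of_le hPS
  have h2 : ¬ ℓ ∣ (P : Subgroup G).index := P.not_dvd_index
  rw [Nat.coprime_comm]
  exact (Nat.Prime.coprime_iff_not_dvd hℓ).mpr fun h => h2 (h.trans h1)
end

section
/- Let k be a perfect field, and let V₁, V₂ be finite-dimensional k-vector spaces. If f ∈ End_k(V₁) and g ∈ End_k(V₂) are semisimple linear endomorphisms, then the tensor product endomorphism f ⊗ g ∈ End_k(V₁ ⊗_k V₂) is semisimple. -/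
universe u

open TensorProduct

variable (k : Type u) [Field k]
    (V₁ V₂ : Type u) [AddCommGroup V₁] [Module k V₁] [AddCommGroup V₂] [Module k V₂]

noncomputable def rTensorAlgHom' : Module.End k V₁ →ₐ[k] Module.End k (V₁ ⊗[k] V₂) where
  toFun f := LinearMap.rTensor V₂ f
  map_one' := LinearMap.rTensor_id V₂ V₁
  map_mul' f g := LinearMap.rTensor_mul V₂ f g
  map_zero' := by ext; simp
  map_add' f g := by ext; simp
  commutes' r := by ext; simp [Module.algebraMap_end_apply, TensorProduct.smul_tmul']

noncomputable def lTensorAlgHom' : Module.End k V₂ →ₐ[k] Module.End k (V₁ ⊗[k] V₂) where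
  toFun g := LinearMap.lTensor V₁ g
  map_one' := LinearMap.lTensor_id V₁ V₂
  map_mul' f g := LinearMap.lTensor_mul V₁ f g
  map_zero' := by ext; simp
  map_add' f g := by ext; simp
  commutes' r := by ext; simp [Module.algebraMap_end_apply]

theorem Module.End.IsSemisimple.tensorProduct_map
    (k : Type u) [Field k] [PerfectField k]
    (V₁ V₂ : Type u) [AddCommGroup V₁] [Module k V₁] [AddCommGroup V₂] [Module k V₂]
    [FiniteDimensional k V₁] [FiniteDimensional k V₂]
    (f : Module.End k V₁) (g : Module.End k V₂)
    (hf : f.IsSemisimple) (hg : g.IsSemisimple) :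
    Module.End.IsSemisimple (TensorProduct.map f g : Module.End k (V₁ ⊗[k] V₂)) := by
  have h1 : Module.End.IsSemisimple (LinearMap.rTensor V₂ f) := by
    apply Module.End.isSemisimple_of_squarefree_aeval_eq_zero hf.minpoly_squarefree
    have := Polynomial.aeval_algHom_apply (rTensorAlgHom' k V₁ V₂) f (minpoly k f)
    simpa [rTensorAlgHom', minpoly.aeval] using this
  have h2 : Module.End.IsSemisimple (LinearMap.lTensor V₁ g) := by
    apply Module.End.isSemisimple_of_squarefree_aeval_eq_zero hg.minpoly_squarefree
    have := Polynomial.aeval_algHom_apply (lTensorAlgHom' k V₁ V₂) g (minpoly k g)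
    simpa [lTensorAlgHom', minpoly.aeval] using this
  have comm : Commute (LinearMap.rTensor V₂ f) (LinearMap.lTensor V₁ g) := by
    ext v w; simp
  have := Module.End.IsSemisimple.mul_of_commute comm h1 h2
  have heq : LinearMap.rTensor V₂ f * LinearMap.lTensor V₁ g
      = (TensorProduct.map f g : Module.End k (V₁ ⊗[k] V₂)) := by
    ext v w; simp
  rwa [heq] at this
end

section
/- Let G be a group, N ⊴ G a finite normal subgroup, and k a field whose characteristic does not divide the order of N. Let M be a k-linear representation of G on which N acts trivially, so that M is naturally a representation of the quotient G/N. Then for every n ≥ 0 the inflation map Hⁿ(G/N, M) → Hⁿ(G, M) is an isomorphism. -/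
/-!
Statement 15: Let `N ⊴ G` be a finite normal subgroup of a group `G`, `k` a field whose
characteristic does not divide `|N|`, and `M` a `k`-linear representation of `G` on which
`N` acts trivially, so that `M` is a representation of `G/N`.  Then for every `n ≥ 0` the
inflation map `Hⁿ(G/N, M) → Hⁿ(G, M)` is an isomorphism (formalised: bijective).
-/

universe u

open CategoryTheory groupCohomology

theorem comp_contractNth {α β : Type*} (φ : α → β) {op : α → α → α} {op' : β → β → β}
    (hφ : ∀ a b, φ (op a b) = op' (φ a) (φ b)) {n : ℕ} (j : Fin (n + 1))
    (g : Fin (n + 1) → α) :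
    (fun i => φ (Fin.contractNth j op g i)) = Fin.contractNth j op' (fun i => φ (g i)) := by
  ext i
  rcases lt_trichotomy (i : ℕ) (j : ℕ) with h | h | h
  · rw [Fin.contractNth_apply_of_lt _ _ _ _ h, Fin.contractNth_apply_of_lt _ _ _ _ h]
  · rw [Fin.contractNth_apply_of_eq _ _ _ _ h, Fin.contractNth_apply_of_eq _ _ _ _ h, hφ]
  · rw [Fin.contractNth_apply_of_gt _ _ _ _ h, Fin.contractNth_apply_of_gt _ _ _ _ h]

section Frozen

variable {k : Type u} [CommRing k] {G H M : Type u} [Group G] [Group H]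
  [AddCommGroup M] [Module k M]

/-- Pulling back inhomogeneous cochains along a group homomorphism `φ : H →* G`,
for representations `ρG` of `G` and `ρH` of `H` on the same module related by
`ρH = ρG ∘ φ`.  This is a morphism of cochain complexes. -/
noncomputable def resCochainMap (φ : H →* G) (ρG : Representation k G M)
    (ρH : Representation k H M) (hcomp : ∀ x, ρH x = ρG (φ x)) :
    inhomogeneousCochains (Rep.of ρG) ⟶ inhomogeneousCochains (Rep.of ρH) where
  f n := ModuleCat.ofHom
    { toFun := fun (f : (Fin n → G) → M) (x : Fin n → H) => f (fun i => φ (x i))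
      map_add' := fun _ _ => rfl
      map_smul' := fun _ _ => rfl }
  comm' i j hij := by
    obtain rfl : i + 1 = j := hij
    simp only [inhomogeneousCochains.d_def, CochainComplex.of_d]
    ext f x
    show (inhomogeneousCochains.d (Rep.of ρH) i).hom _ x
      = (inhomogeneousCochains.d (Rep.of ρG) i).hom f (fun l => φ (x l))
    simp only [inhomogeneousCochains.d, ModuleCat.hom_ofHom, LinearMap.coe_mk, AddHom.coe_mk]
    congr 1
    · show (ρH (x 0)) _ = (ρG (φ (x 0))) _
      rw [hcomp]
      rfl
    · refine Finset.sum_congr rfl fun j _ => ?_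
      congr 1
      show f (fun l => φ (Fin.contractNth j (· * ·) x l)) = _
      rw [comp_contractNth φ (map_mul φ)]

/-- The map `Hⁿ(G, M) → Hⁿ(H, M)` induced on group cohomology by a group homomorphism
`φ : H →* G`; for `φ = QuotientGroup.mk' N : G →* G/N` this is the inflation map
`Hⁿ(G/N, M) → Hⁿ(G, M)`. -/
noncomputable def cohomologyResMap (φ : H →* G) (ρG : Representation k G M)
    (ρH : Representation k H M) (hcomp : ∀ x, ρH x = ρG (φ x)) (n : ℕ) :
    groupCohomology (Rep.of ρG) n ⟶ groupCohomology (Rep.of ρH) n :=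
  HomologicalComplex.homologyMap (resCochainMap φ ρG ρH hcomp) n

end Frozen

set_option linter.unusedSectionVars false
set_option linter.unusedSimpArgs false
set_option maxHeartbeats 1000000

section Aux
variable {k : Type u} [Field k] {G : Type u} [Group G] (N : Subgroup G) [N.Normal] [Fintype ↥N]

lemma ma_smul_single_one {X : Type u} (a : X) (b : k) :
    b • MonoidAlgebra.single a (1:k) = MonoidAlgebra.single a b := by
  rw [MonoidAlgebra.smul_single', mul_one]

lemma sum_comp_succAbove {n : ℕ} {β : Type*} [AddCommMonoid β] (p : Fin (n+1))
    (F : (Fin n → ↥N) → β) :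
    ∑ m : Fin (n+1) → ↥N, F (fun j => m (p.succAbove j)) =
      Fintype.card ↥N • ∑ f : Fin n → ↥N, F f := by
  classical
  rw [← (Fin.insertNthEquiv (fun _ => (↥N : Type u)) p).sum_comp
    (fun m => F (fun j => m (p.succAbove j))), Fintype.sum_prod_type]
  simp only [Fin.insertNthEquiv_apply, Fin.insertNth_apply_succAbove]
  rw [Finset.sum_const, Finset.card_univ]

variable (k)

noncomputable def avgMap (n : ℕ) :
    MonoidAlgebra k (Fin n → G ⧸ N) →ₗ[k] MonoidAlgebra k (Fin n → G) :=
  Finsupp.linearCombination k (fun c => ((Fintype.card ↥N : k)⁻¹ ^ n) •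
      ∑ m : Fin n → ↥N, MonoidAlgebra.single (fun i => (c i).out * (m i : G)) (1:k)) ∘ₗ
    (MonoidAlgebra.coeffLinearEquiv k).toLinearMap

lemma avgMap_single {n : ℕ} (c : Fin n → G ⧸ N) :
    avgMap k N n (MonoidAlgebra.single c 1) = ((Fintype.card ↥N : k)⁻¹ ^ n) •
      ∑ m : Fin n → ↥N, MonoidAlgebra.single (fun i => (c i).out * (m i : G)) 1 := by
  simp [avgMap]

lemma d_comp_avgMap (hc : (Fintype.card ↥N : k) ≠ 0) (n : ℕ) :
    (Rep.standardComplex.d k G n) ∘ₗ (avgMap k N (n+1)) =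
      (avgMap k N n) ∘ₗ (Rep.standardComplex.d k (G ⧸ N) n) := by
  refine MonoidAlgebra.lhom_ext' fun c => LinearMap.ext_ring ?_
  simp only [LinearMap.comp_apply, MonoidAlgebra.lsingle_apply, avgMap_single, map_smul, map_sum,
    Rep.standardComplex.d_of]
  rw [Finset.sum_comm, Finset.smul_sum]
  refine Finset.sum_congr rfl fun p _ => ?_
  rw [← ma_smul_single_one (c ∘ p.succAbove) ((-1:k)^(p:ℕ)), map_smul, avgMap_single]
  have hmarg := sum_comp_succAbove N p
    (fun f : Fin n → ↥N => MonoidAlgebra.single (fun j => (c (p.succAbove j)).out * (f j : G)) ((-1:k)^(p:ℕ)))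
  rw [show (∑ m : Fin (n+1) → ↥N,
      MonoidAlgebra.single ((fun i => (c i).out * ((m i : G))) ∘ p.succAbove) ((-1:k)^(p:ℕ)))
      = ∑ m : Fin (n+1) → ↥N,
      (fun f : Fin n → ↥N => MonoidAlgebra.single (fun j => (c (p.succAbove j)).out * (f j : G))
        ((-1:k)^(p:ℕ))) (fun j => m (p.succAbove j)) from rfl, hmarg]
  rw [← Nat.cast_smul_eq_nsmul k, smul_smul, smul_smul]
  rw [show ∑ f : Fin n → ↥N, MonoidAlgebra.single (fun j => (c (p.succAbove j)).out * (f j : G)) ((-1:k)^(p:ℕ))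
      = ∑ f : Fin n → ↥N, ((-1:k)^(p:ℕ)) • MonoidAlgebra.single (fun j => ((c ∘ p.succAbove) j).out * (f j : G)) (1:k) from
    Finset.sum_congr rfl fun f _ => by rw [ma_smul_single_one]; rfl]
  rw [← Finset.smul_sum, smul_smul]
  congr 1
  rw [pow_succ]
  field_simp

end Aux

section Aux2
variable {k : Type u} [Field k] {G : Type u} [Group G] (N : Subgroup G) [N.Normal] [Fintype ↥N]

lemma sum_single_lift_eq {n : ℕ} (x y : Fin n → G)
    (h : ∀ i, (QuotientGroup.mk (x i) : G ⧸ N) = QuotientGroup.mk (y i)) :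
    ∑ m : Fin n → ↥N, MonoidAlgebra.single (fun i => x i * (m i : G)) (1:k) =
      ∑ m : Fin n → ↥N, MonoidAlgebra.single (fun i => y i * (m i : G)) (1:k) := by
  have hz : ∀ i, (x i)⁻¹ * y i ∈ N := fun i => (QuotientGroup.eq).mp (h i)
  rw [← (Equiv.piCongrRight (fun i => Equiv.mulLeft (⟨(x i)⁻¹ * y i, hz i⟩ : ↥N))).sum_comp]
  refine Finset.sum_congr rfl fun m _ => ?_
  congr 1
  funext i
  simp only [Equiv.piCongrRight_apply, Pi.map_apply, Equiv.coe_mulLeft, Subgroup.coe_mul]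
  group

variable (k)

noncomputable def mkMap (n : ℕ) :
    MonoidAlgebra k (Fin n → G) →ₗ[k] MonoidAlgebra k (Fin n → G ⧸ N) :=
  MonoidAlgebra.mapDomainLinearMap k k (fun x i => (QuotientGroup.mk (x i) : G ⧸ N))

lemma mkMap_single {n : ℕ} (x : Fin n → G) (r : k) :
    mkMap k N n (MonoidAlgebra.single x r) =
      MonoidAlgebra.single (fun i => (QuotientGroup.mk (x i) : G ⧸ N)) r := by
  simp [mkMap]

lemma mkMap_comp_avgMap (hc : (Fintype.card ↥N : k) ≠ 0) (n : ℕ) :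
    (mkMap k N n) ∘ₗ (avgMap k N n) = LinearMap.id := by
  refine MonoidAlgebra.lhom_ext' fun c => LinearMap.ext_ring ?_
  simp only [LinearMap.comp_apply, LinearMap.id_apply, MonoidAlgebra.lsingle_apply, avgMap_single,
    map_smul, map_sum, mkMap_single]
  rw [Finset.sum_congr rfl (fun (m : Fin n → ↥N) _ =>
    show (MonoidAlgebra.single (fun i => (QuotientGroup.mk ((c i).out * (m i : G)) : G ⧸ N)) (1:k))
        = MonoidAlgebra.single c 1 by
      congr 1
      funext i
      rw [QuotientGroup.mk_mul, QuotientGroup.out_eq',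
        (QuotientGroup.eq_one_iff _).mpr (SetLike.coe_mem (m i)), mul_one])]
  simp only [Finset.sum_const, Finset.card_univ, Fintype.card_pi, Finset.prod_const,
    Fintype.card_fin]
  rw [← Nat.cast_smul_eq_nsmul k, smul_smul, Nat.cast_pow, inv_pow,
    inv_mul_cancel₀ (pow_ne_zero _ hc), one_smul]

lemma d_comp_mkMap (n : ℕ) :
    (Rep.standardComplex.d k (G ⧸ N) n) ∘ₗ (mkMap k N (n+1)) =
      (mkMap k N n) ∘ₗ (Rep.standardComplex.d k G n) := by
  refine MonoidAlgebra.lhom_ext' fun x => LinearMap.ext_ring ?_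
  simp only [LinearMap.comp_apply, MonoidAlgebra.lsingle_apply, mkMap_single,
    Rep.standardComplex.d_of, map_sum]
  exact Finset.sum_congr rfl fun p _ => rfl

lemma avgMap_equivariant {n : ℕ} (g : G) :
    (Representation.ofMulAction k G (Fin n → G) g) ∘ₗ (avgMap k N n) =
      (avgMap k N n) ∘ₗ
        (Representation.ofMulAction k (G ⧸ N) (Fin n → G ⧸ N) (QuotientGroup.mk g)) := by
  refine MonoidAlgebra.lhom_ext' fun c => LinearMap.ext_ring ?_
  simp only [LinearMap.comp_apply, MonoidAlgebra.lsingle_apply, avgMap_single, map_smul, map_sum,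
    Representation.ofMulAction_single]
  refine congrArg _ ?_
  rw [Finset.sum_congr rfl (fun (m : Fin n → ↥N) _ =>
    show (MonoidAlgebra.single (g • fun i => (c i).out * ((m i : G))) (1:k))
        = MonoidAlgebra.single (fun i => (g * (c i).out) * ((m i : G))) (1:k) by
      congr 1
      funext i
      simp [mul_assoc])]
  exact sum_single_lift_eq N _ _ (fun i => by
    rw [QuotientGroup.mk_mul, QuotientGroup.out_eq', QuotientGroup.out_eq']
    rfl)

lemma mkMap_equivariant {n : ℕ} (g : G) :
    (Representation.ofMulAction k (G ⧸ N) (Fin n → G ⧸ N) (QuotientGroup.mk g)) ∘ₗ (mkMap k N n)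
      = (mkMap k N n) ∘ₗ (Representation.ofMulAction k G (Fin n → G) g) := by
  refine MonoidAlgebra.lhom_ext' fun x => LinearMap.ext_ring ?_
  simp only [LinearMap.comp_apply, MonoidAlgebra.lsingle_apply, mkMap_single,
    Representation.ofMulAction_single]
  congr 1

lemma mkMap_equivariant_apply {n : ℕ} (g : G) (x : MonoidAlgebra k (Fin n → G)) :
    mkMap k N n (Representation.ofMulAction k G (Fin n → G) g x) =
      Representation.ofMulAction k (G ⧸ N) (Fin n → G ⧸ N) (QuotientGroup.mk g) (mkMap k N n x) :=
  (LinearMap.congr_fun (mkMap_equivariant k N g) x).symm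

lemma avgMap_equivariant_apply {n : ℕ} (g : G) (x : MonoidAlgebra k (Fin n → G ⧸ N)) :
    avgMap k N n (Representation.ofMulAction k (G ⧸ N) (Fin n → G ⧸ N) (QuotientGroup.mk g) x) =
      Representation.ofMulAction k G (Fin n → G) g (avgMap k N n x) :=
  (LinearMap.congr_fun (avgMap_equivariant k N g) x).symm

lemma d_mkMap_apply (n : ℕ) (x : MonoidAlgebra k (Fin (n+1) → G)) :
    mkMap k N n (Rep.standardComplex.d k G n x) =
      Rep.standardComplex.d k (G ⧸ N) n (mkMap k N (n+1) x) :=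
  (LinearMap.congr_fun (d_comp_mkMap k N n) x).symm

lemma d_avgMap_apply (hc : (Fintype.card ↥N : k) ≠ 0) (n : ℕ)
    (x : MonoidAlgebra k (Fin (n+1) → G ⧸ N)) :
    avgMap k N n (Rep.standardComplex.d k (G ⧸ N) n x) =
      Rep.standardComplex.d k G n (avgMap k N (n+1) x) :=
  (LinearMap.congr_fun (d_comp_avgMap k N hc n) x).symm

lemma mkMap_avgMap_apply (hc : (Fintype.card ↥N : k) ≠ 0) (n : ℕ)
    (x : MonoidAlgebra k (Fin n → G ⧸ N)) : mkMap k N n (avgMap k N n x) = x :=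
  LinearMap.congr_fun (mkMap_comp_avgMap k N hc n) x

end Aux2

theorem diagInv {k G : Type u} [CommRing k] [Group G] : ∀ (m : ℕ) (f : Fin m → G) (g : G) (r : k),
    (Rep.diagonalSuccIsoFree k G m).inv.hom (Finsupp.single f (MonoidAlgebra.single g r)) =
      MonoidAlgebra.single (g • Fin.partialProd f) r := by
  intro m f g r
  simp only [Rep.diagonalSuccIsoFree, Rep.diagonalSuccIsoTensorTrivial, Iso.trans_inv, Rep.hom_comp,
    Representation.IntertwiningMap.comp_apply]
  have step1 : (Rep.Hom.hom (Rep.leftRegularTensorTrivialIsoFree k G (Fin m → G)).inv)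
      (Finsupp.single f (.single g r)) = .single g 1 ⊗ₜ[k] .single f r :=
    Representation.leftRegularTensorTrivialIsoFree_symm_apply_single_single f g r
  rw [step1]
  simp only [Rep.mkIso_inv, Representation.linearizeOfMulActionIso, Representation.Equiv.mk_symm,
    LinearEquiv.refl_symm, ConcreteCategory.hom_ofHom, Action.tensorObj_V, Action.trivial_V,
    Functor.mapIso_inv, Rep.tensor_V, Rep.tensor_ρ, Iso.symm_inv, Functor.Monoidal.μIso_hom,
    Rep.μ_hom, MonoidalCategory.tensorIso_inv, Representation.linearizeTrivialIso,
    Rep.hom_tensorHom, Representation.IntertwiningMap.tensor_apply,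
    Representation.Equiv.coe_toIntertwiningMap, Representation.Equiv.mk_apply,
    LinearEquiv.refl_apply]
  have key₁ := Representation.linearizeMap_single (k := k)
    (Action.diagonalSuccIsoTensorTrivial G m).inv (g, f) ((1 : k) * r)
  have key₂ := Representation.LinearizeMonoidal.μ_apply_single_single (k := k)
    (X := Action.leftRegular G) (Y := Action.trivial G (Fin m → G)) g f 1 r
  exact ((congrArg (fun z => (Representation.linearizeMap
    (Action.diagonalSuccIsoTensorTrivial G m).inv) z) key₂).trans key₁).trans
    (by rw [Action.diagonalSuccIsoTensorTrivial_inv_hom_apply, one_mul])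

section Yoneda

variable {k : Type u} [CommRing k] {V : Type (u+1)} [CategoryTheory.LargeCategory V]
  [CategoryTheory.Abelian V] [CategoryTheory.Linear k V]

noncomputable def precompYoneda {C D : ChainComplex V ℕ} (f : C ⟶ D) (A : V) :
    D.linearYonedaObj k A ⟶ C.linearYonedaObj k A where
  f n := ModuleCat.ofHom
    { toFun := fun φ => f.f n ≫ φ
      map_add' := fun _ _ => Preadditive.comp_add _ _ _ _ _ _
      map_smul' := fun _ _ => CategoryTheory.Linear.comp_smul _ _ _ _ _ _ }
  comm' i j hij := by
    ext (φ : D.X i ⟶ A)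
    show C.d j i ≫ f.f i ≫ φ = f.f j ≫ D.d j i ≫ φ
    rw [← Category.assoc, ← Category.assoc, f.comm j i]

lemma precompYoneda_apply {C D : ChainComplex V ℕ} (f : C ⟶ D) (A : V) (n : ℕ)
    (φ : D.X n ⟶ A) : ((precompYoneda (k := k) f A).f n).hom φ = f.f n ≫ φ := rfl

lemma precompYoneda_id (C : ChainComplex V ℕ) (A : V) :
    precompYoneda (k := k) (𝟙 C) A = 𝟙 (C.linearYonedaObj k A) := by
  ext n φ
  exact Category.id_comp _

lemma precompYoneda_comp {C D E : ChainComplex V ℕ} (f : C ⟶ D) (g : D ⟶ E) (A : V) :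
    precompYoneda (k := k) g A ≫ precompYoneda (k := k) f A = precompYoneda (k := k) (f ≫ g) A := by
  ext n φ
  exact (Category.assoc _ _ _).symm

noncomputable def precompYonedaHom {C D : ChainComplex V ℕ} {f₁ f₂ : C ⟶ D}
    (h : Homotopy f₁ f₂) (A : V) (i j : ℕ) :
    (D.linearYonedaObj k A).X i ⟶ (C.linearYonedaObj k A).X j :=
  ModuleCat.ofHom
    { toFun := fun φ => h.hom j i ≫ φ
      map_add' := fun _ _ => Preadditive.comp_add _ _ _ _ _ _
      map_smul' := fun _ _ => CategoryTheory.Linear.comp_smul _ _ _ _ _ _ }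

noncomputable def precompYonedaHomotopy {C D : ChainComplex V ℕ} {f₁ f₂ : C ⟶ D}
    (h : Homotopy f₁ f₂) (A : V) :
    Homotopy (precompYoneda (k := k) f₁ A) (precompYoneda (k := k) f₂ A) where
  hom := precompYonedaHom h A
  zero i j hij := by
    ext (φ : D.X i ⟶ A)
    show h.hom j i ≫ φ = 0
    have hn : ¬ (ComplexShape.down ℕ).Rel i j := by
      rw [ComplexShape.down_Rel]
      intro hr
      exact hij (by rw [ComplexShape.up_Rel]; omega)
    rw [h.zero j i hn, Limits.zero_comp]
  comm i := by
    ext (φ : D.X i ⟶ A)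
    show f₁.f i ≫ φ = _
    rw [h.comm i, Preadditive.add_comp, Preadditive.add_comp]
    rcases i with _ | m
    · rw [dNext_eq_zero h.hom 0 (by simp), prevD_eq h.hom
        (show (ComplexShape.down ℕ).Rel (0+1) 0 by simp), Limits.zero_comp,
        dNext_eq (i := 0) _ (show (ComplexShape.up ℕ).Rel 0 (0+1) by simp),
        prevD_eq_zero (i := 0) _ (by simp)]
      show 0 + (h.hom 0 (0+1) ≫ D.d (0+1) 0) ≫ φ + f₂.f 0 ≫ φ
        = h.hom 0 (0+1) ≫ (D.d (0+1) 0 ≫ φ) + 0 + f₂.f 0 ≫ φ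
      rw [← Category.assoc]
      abel
    · rw [dNext_eq h.hom (show (ComplexShape.down ℕ).Rel (m+1) m by simp),
        prevD_eq h.hom (show (ComplexShape.down ℕ).Rel (m+1+1) (m+1) by simp),
        dNext_eq (i := m+1) _ (show (ComplexShape.up ℕ).Rel (m+1) (m+1+1) by simp),
        prevD_eq (j := m+1) _ (show (ComplexShape.up ℕ).Rel m (m+1) by simp)]
      show (C.d (m+1) m ≫ h.hom m (m+1)) ≫ φ + (h.hom (m+1) (m+1+1) ≫ D.d (m+1+1) (m+1)) ≫ φ
          + f₂.f (m+1) ≫ φ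
        = h.hom (m+1) (m+1+1) ≫ (D.d (m+1+1) (m+1) ≫ φ)
          + C.d (m+1) m ≫ (h.hom m (m+1) ≫ φ) + f₂.f (m+1) ≫ φ
      rw [← Category.assoc, ← Category.assoc]
      abel

end Yoneda

section Infl

variable {k : Type u} [Field k] {G : Type u} [Group G] (N : Subgroup G) [N.Normal] [Fintype ↥N]
  {M : Type u} [AddCommGroup M] [Module k M]

noncomputable def eEndo (hc : (Fintype.card ↥N : k) ≠ 0) :
    Rep.standardComplex k G ⟶ Rep.standardComplex k G where
  f n := Rep.ofHom
    ⟨(avgMap k N (n+1)) ∘ₗ (mkMap k N (n+1)), fun g => by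
        show ((avgMap k N (n+1)) ∘ₗ (mkMap k N (n+1))) ∘ₗ
            (Representation.ofMulAction k G (Fin (n+1) → G) g)
          = (Representation.ofMulAction k G (Fin (n+1) → G) g) ∘ₗ
            ((avgMap k N (n+1)) ∘ₗ (mkMap k N (n+1)))
        rw [LinearMap.comp_assoc, ← mkMap_equivariant, ← LinearMap.comp_assoc,
          ← avgMap_equivariant, LinearMap.comp_assoc]⟩
  comm' i j hij := by
    obtain rfl : i = j + 1 := by simpa using hij.symm
    refine Rep.hom_ext (Representation.IntertwiningMap.ext ?_)
    show ((Rep.standardComplex k G).d (j+1) j).hom.toLinearMap ∘ₗ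
        ((avgMap k N (j+1+1)) ∘ₗ (mkMap k N (j+1+1)))
      = ((avgMap k N (j+1)) ∘ₗ (mkMap k N (j+1))) ∘ₗ
        ((Rep.standardComplex k G).d (j+1) j).hom.toLinearMap
    rw [Rep.standardComplex.d_eq]
    change Rep.standardComplex.d k G (j + 1) ∘ₗ avgMap k N (j + 1 + 1) ∘ₗ mkMap k N (j + 1 + 1) =
      (avgMap k N (j + 1) ∘ₗ mkMap k N (j + 1)) ∘ₗ Rep.standardComplex.d k G (j + 1)
    rw [← LinearMap.comp_assoc, d_comp_avgMap k N hc (j+1), LinearMap.comp_assoc,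
      d_comp_mkMap, ← LinearMap.comp_assoc]

variable (ρ : Representation k G M) (ρQ : Representation k (G ⧸ N) M)
  (hQ : ∀ g : G, ρQ (QuotientGroup.mk g) = ρ g)

noncomputable def yInfl :
    (Rep.standardComplex k (G ⧸ N)).linearYonedaObj k (Rep.of (ρQ)) ⟶
      (Rep.standardComplex k G).linearYonedaObj k (Rep.of ρ) where
  f n := ModuleCat.ofHom
    { toFun := fun (ψ : (Rep.standardComplex k (G ⧸ N)).X n ⟶ Rep.of (ρQ)) =>
        (Rep.ofHom ⟨ψ.hom.toLinearMap ∘ₗ mkMap k N (n+1), fun g =>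
          LinearMap.ext fun (x : MonoidAlgebra k (Fin (n+1) → G)) => by
            show ψ.hom (mkMap k N (n+1) (Representation.ofMulAction k G (Fin (n+1) → G) g x))
              = ρ g (ψ.hom (mkMap k N (n+1) x))
            rw [mkMap_equivariant_apply]
            exact (Rep.hom_comm_apply ψ (QuotientGroup.mk g) _).trans
              (LinearMap.congr_fun (hQ g) _)⟩ :
          (Rep.standardComplex k G).X n ⟶ Rep.of ρ)
      map_add' := fun ψ₁ ψ₂ => Rep.hom_ext (Representation.IntertwiningMap.ext
        (LinearMap.add_comp _ _ _))
      map_smul' := fun r ψ => Rep.hom_ext (Representation.IntertwiningMap.ext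
        (LinearMap.smul_comp _ _ _)) }
  comm' i j hij := by
    obtain rfl : j = i + 1 := by simpa using hij.symm
    refine ModuleCat.hom_ext (LinearMap.ext fun
      (ψ : (Rep.standardComplex k (G ⧸ N)).X i ⟶ Rep.of (ρQ)) => ?_)
    refine Rep.hom_ext (Representation.IntertwiningMap.ext (LinearMap.ext
      fun (x : MonoidAlgebra k (Fin (i+1+1) → G)) => ?_))
    show ψ.hom (mkMap k N (i+1) (((Rep.standardComplex k G).d (i+1) i).hom x))
      = ψ.hom (((Rep.standardComplex k (G ⧸ N)).d (i+1) i).hom (mkMap k N (i+1+1) x))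
    rw [Rep.standardComplex.d_apply, Rep.standardComplex.d_apply, d_mkMap_apply]

noncomputable def yProj (hc : (Fintype.card ↥N : k) ≠ 0) :
    (Rep.standardComplex k G).linearYonedaObj k (Rep.of ρ) ⟶
      (Rep.standardComplex k (G ⧸ N)).linearYonedaObj k (Rep.of (ρQ)) where
  f n := ModuleCat.ofHom
    { toFun := fun (φ : (Rep.standardComplex k G).X n ⟶ Rep.of ρ) =>
        (Rep.ofHom ⟨φ.hom.toLinearMap ∘ₗ avgMap k N (n+1), fun q =>
          LinearMap.ext fun (x : MonoidAlgebra k (Fin (n+1) → G ⧸ N)) => by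
            obtain ⟨g, rfl⟩ := QuotientGroup.mk_surjective q
            show φ.hom (avgMap k N (n+1)
                (Representation.ofMulAction k (G ⧸ N) (Fin (n+1) → G ⧸ N) (QuotientGroup.mk g) x))
              = ρQ (QuotientGroup.mk g) (φ.hom (avgMap k N (n+1) x))
            rw [avgMap_equivariant_apply, hQ]
            exact Rep.hom_comm_apply φ g _⟩ :
          (Rep.standardComplex k (G ⧸ N)).X n ⟶ Rep.of (ρQ))
      map_add' := fun φ₁ φ₂ => Rep.hom_ext (Representation.IntertwiningMap.ext
        (LinearMap.add_comp _ _ _))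
      map_smul' := fun r φ => Rep.hom_ext (Representation.IntertwiningMap.ext
        (LinearMap.smul_comp _ _ _)) }
  comm' i j hij := by
    obtain rfl : j = i + 1 := by simpa using hij.symm
    refine ModuleCat.hom_ext (LinearMap.ext fun
      (φ : (Rep.standardComplex k G).X i ⟶ Rep.of ρ) => ?_)
    refine Rep.hom_ext (Representation.IntertwiningMap.ext (LinearMap.ext
      fun (x : MonoidAlgebra k (Fin (i+1+1) → G ⧸ N)) => ?_))
    show φ.hom (avgMap k N (i+1) (((Rep.standardComplex k (G ⧸ N)).d (i+1) i).hom x))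
      = φ.hom (((Rep.standardComplex k G).d (i+1) i).hom (avgMap k N (i+1+1) x))
    rw [Rep.standardComplex.d_apply, Rep.standardComplex.d_apply, d_avgMap_apply k N hc]

end Infl

section Glue

variable {k : Type u} [Field k] {G : Type u} [Group G] (N : Subgroup G) [N.Normal] [Fintype ↥N]
  {M : Type u} [AddCommGroup M] [Module k M]
  (ρ : Representation k G M) (ρQ : Representation k (G ⧸ N) M)
  (hQ : ∀ g : G, ρQ (QuotientGroup.mk g) = ρ g)

lemma yInfl_comp_yProj (hc : (Fintype.card ↥N : k) ≠ 0) :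
    yInfl N ρ ρQ hQ ≫ yProj N ρ ρQ hQ hc = 𝟙 _ := by
  ext n : 1
  refine ModuleCat.hom_ext (LinearMap.ext fun
    (ψ : (Rep.standardComplex k (G ⧸ N)).X n ⟶ Rep.of (ρQ)) => ?_)
  refine Rep.hom_ext (Representation.IntertwiningMap.ext (LinearMap.ext
    fun (x : MonoidAlgebra k (Fin (n+1) → G ⧸ N)) => ?_))
  show ψ.hom (mkMap k N (n+1) (avgMap k N (n+1) x)) = ψ.hom x
  rw [mkMap_avgMap_apply k N hc]

lemma yProj_comp_yInfl (hc : (Fintype.card ↥N : k) ≠ 0) :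
    yProj N ρ ρQ hQ hc ≫ yInfl N ρ ρQ hQ = precompYoneda (k := k) (eEndo N hc) (Rep.of ρ) := by
  ext n : 1
  refine ModuleCat.hom_ext (LinearMap.ext fun
    (φ : (Rep.standardComplex k G).X n ⟶ Rep.of ρ) => ?_)
  rfl

lemma eEndo_comp_εToSingle₀ (hc : (Fintype.card ↥N : k) ≠ 0) :
    eEndo N hc ≫ Rep.standardComplex.εToSingle₀ k G = Rep.standardComplex.εToSingle₀ k G := by
  apply (ChainComplex.toSingle₀Equiv _ _).injective
  rw [Subtype.ext_iff]
  simp only [ChainComplex.toSingle₀Equiv_apply_coe, HomologicalComplex.comp_f]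
  rw [show (Rep.standardComplex.εToSingle₀ k G).f 0 = Rep.standardComplex.ε k G from
    ChainComplex.toSingle₀Equiv_symm_apply_f_zero _ _]
  refine Rep.hom_ext (Representation.IntertwiningMap.ext ?_)
  show (Rep.standardComplex.ε k G).hom.toLinearMap ∘ₗ (avgMap k N 1 ∘ₗ mkMap k N 1)
    = (Rep.standardComplex.ε k G).hom.toLinearMap
  refine MonoidAlgebra.lhom_ext' fun x => LinearMap.ext_ring ?_
  have hone : ∀ (y : Fin 1 → G),
      (Rep.standardComplex.ε k G).hom.toLinearMap (MonoidAlgebra.single y (1:k)) = (1:k) :=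
    fun y => by simp [Rep.standardComplex.ε]
  simp only [LinearMap.comp_apply, MonoidAlgebra.lsingle_apply, mkMap_single, avgMap_single,
    map_smul, map_sum, hone]
  simp only [Finset.sum_const, Finset.card_univ, Fintype.card_pi, Finset.prod_const,
    Fintype.card_fin]
  rw [pow_one, pow_one, ← Nat.cast_smul_eq_nsmul k, smul_smul, inv_mul_cancel₀ hc, one_smul]

noncomputable def eEndoHomotopy (hc : (Fintype.card ↥N : k) ≠ 0) :
    Homotopy (eEndo N hc) (𝟙 (Rep.standardComplex k G)) :=
  ProjectiveResolution.liftHomotopy (𝟙 (Rep.trivial k G k))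
    (P := Rep.standardResolution k G)
    (Q := Rep.standardResolution k G)
    (eEndo N hc) (𝟙 _)
    (by show eEndo N hc ≫ Rep.standardComplex.εToSingle₀ k G = Rep.standardComplex.εToSingle₀ k G ≫ _
        rw [CategoryTheory.Functor.map_id, Category.comp_id]
        exact eEndo_comp_εToSingle₀ N hc)
    (by rw [CategoryTheory.Functor.map_id, Category.comp_id, Category.id_comp])

end Glue

noncomputable def JIso {k G : Type u} [CommRing k] [Group G] (A : Rep k G) :
    inhomogeneousCochains A ≅ (Rep.standardComplex k G).linearYonedaObj k A :=
  inhomogeneousCochainsIso A ≪≫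
    { hom := precompYoneda (k := k) (Rep.barComplex.isoStandardComplex k G).inv A
      inv := precompYoneda (k := k) (Rep.barComplex.isoStandardComplex k G).hom A
      hom_inv_id := by rw [precompYoneda_comp, Iso.hom_inv_id, precompYoneda_id]
      inv_hom_id := by rw [precompYoneda_comp, Iso.inv_hom_id, precompYoneda_id] }



lemma mk_partialProd {G' : Type u} [Group G'] (N : Subgroup G') [N.Normal] {n : ℕ}
    (x : Fin n → G') (i : Fin (n+1)) :
    (QuotientGroup.mk (Fin.partialProd x i) : G' ⧸ N)
      = Fin.partialProd (fun j => QuotientGroup.mk' N (x j)) i := by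
  induction i using Fin.induction with
  | zero => simp [Fin.partialProd_zero]
  | succ i ih => rw [Fin.partialProd_succ, Fin.partialProd_succ, QuotientGroup.mk_mul, ih]; rfl

set_option maxRecDepth 20000 in
lemma resCochainMap_eq_yInfl {K : Type u} [Field K] {G' : Type u} [Group G'] (N : Subgroup G')
    [N.Normal] [Fintype ↥N] {M' : Type u} [AddCommGroup M'] [Module K M']
    (ρ : Representation K G' M') (ρQ : Representation K (G' ⧸ N) M')
    (hQ : ∀ g : G', ρQ (QuotientGroup.mk g) = ρ g)
    (hcomp : ∀ x, ρ x = ρQ ((QuotientGroup.mk' N) x)) :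
    resCochainMap (QuotientGroup.mk' N) ρQ ρ hcomp
      = (JIso (Rep.of ρQ)).hom ≫ yInfl N ρ ρQ hQ ≫ (JIso (Rep.of ρ)).inv := by
  ext n : 1
  refine ModuleCat.hom_ext (LinearMap.ext fun f => ?_)
  funext x
  have hinv : ∀ φ : (Rep.barComplex K G').X n ⟶ Rep.of ρ,
      ((inhomogeneousCochainsIso (Rep.of ρ)).inv.f n).hom φ x
        = φ.hom (Finsupp.single x (MonoidAlgebra.single 1 1)) := fun φ => rfl
  have key : ∀ y, (((inhomogeneousCochainsIso (Rep.of ρQ)).hom.f n).hom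
      f).hom (Finsupp.single y (MonoidAlgebra.single 1 1)) = f y := fun y =>
    congrFun ((Rep.freeLiftLEquiv K (G' ⧸ N) (Fin n → G' ⧸ N)
      (Rep.of ρQ)).apply_symm_apply f) y
  have hp : (fun i => (QuotientGroup.mk (((1 : G') • Fin.partialProd x) i) : G' ⧸ N))
      = (1 : G' ⧸ N) • Fin.partialProd (fun i => (QuotientGroup.mk' N) (x i)) := by
    funext i
    simp only [Pi.smul_apply, one_smul]
    exact mk_partialProd N x i
  have goal' : f (fun i => (QuotientGroup.mk' N) (x i))
      = (((inhomogeneousCochainsIso (Rep.of ρQ)).hom.f n).hom f).hom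
        ((Rep.diagonalSuccIsoFree K (G' ⧸ N) n).hom.hom
          (mkMap K N (n+1) ((Rep.diagonalSuccIsoFree K G' n).inv.hom
            (Finsupp.single x (MonoidAlgebra.single 1 1))))) := by
    rw [diagInv, mkMap_single, hp, ← diagInv, Rep.hom_inv_apply, key]
  exact goal'

theorem inflation_general {k : Type u} [Field k] (G : Type u) [Group G] (N : Subgroup G)
    [N.Normal] [Fintype ↥N] (hc : (Fintype.card ↥N : k) ≠ 0)
    (M : Type u) [AddCommGroup M] [Module k M] (ρ : Representation k G M)
    (ρQ : Representation k (G ⧸ N) M) (hQ : ∀ g : G, ρQ (QuotientGroup.mk g) = ρ g)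
    (hcomp : ∀ x, ρ x = ρQ ((QuotientGroup.mk' N) x)) (n : ℕ) :
    Function.Bijective (cohomologyResMap (QuotientGroup.mk' N) ρQ ρ hcomp n) := by
  set res := resCochainMap (QuotientGroup.mk' N) ρQ ρ hcomp with hres0
  have hres : res = (JIso (Rep.of ρQ)).hom ≫ yInfl N ρ ρQ hQ ≫ (JIso (Rep.of ρ)).inv :=
    resCochainMap_eq_yInfl N ρ ρQ hQ hcomp
  set π := (JIso (Rep.of ρ)).hom ≫ yProj N ρ ρQ hQ hc ≫ (JIso (Rep.of ρQ)).inv with hπ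
  have h1 : res ≫ π = 𝟙 _ := by
    rw [hres, hπ]
    simp only [Category.assoc, Iso.inv_hom_id_assoc]
    rw [← Category.assoc (yInfl N ρ ρQ hQ), yInfl_comp_yProj N ρ ρQ hQ hc, Category.id_comp,
      Iso.hom_inv_id]
  have h2 : π ≫ res = (JIso (Rep.of ρ)).hom ≫
      (precompYoneda (k := k) (eEndo N hc) (Rep.of ρ) ≫ (JIso (Rep.of ρ)).inv) := by
    rw [hres, hπ]
    simp only [Category.assoc, Iso.inv_hom_id_assoc]
    rw [← Category.assoc (yProj N ρ ρQ hQ hc), yProj_comp_yInfl N ρ ρQ hQ hc]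
  have H : Homotopy (π ≫ res) (𝟙 _) := by
    rw [h2]
    exact (((precompYonedaHomotopy (eEndoHomotopy N hc) (Rep.of ρ)).trans
      (Homotopy.ofEq (precompYoneda_id _ _))).compRight
        (JIso (Rep.of ρ)).inv).compLeft
          (JIso (Rep.of ρ)).hom |>.trans
      (Homotopy.ofEq (by simp))
  have hFP : HomologicalComplex.homologyMap res n ≫ HomologicalComplex.homologyMap π n
      = 𝟙 _ := by
    rw [← HomologicalComplex.homologyMap_comp, h1, HomologicalComplex.homologyMap_id]
  have hPF : HomologicalComplex.homologyMap π n ≫ HomologicalComplex.homologyMap res n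
      = 𝟙 _ := by
    rw [← HomologicalComplex.homologyMap_comp, H.homologyMap_eq n,
      HomologicalComplex.homologyMap_id]
  haveI : IsIso (HomologicalComplex.homologyMap res n) := ⟨⟨_, hFP, hPF⟩⟩
  exact ConcreteCategory.bijective_of_isIso (HomologicalComplex.homologyMap res n)

/-- **Inflation along a finite normal subgroup of order invertible in `k` is an
isomorphism on group cohomology.** -/
theorem groupCohomology_inflation_bijective
    {k : Type u} [Field k] (G : Type u) [Group G] (N : Subgroup G) [N.Normal]
    [Finite N] (hord : ¬ (ringChar k : ℕ) ∣ Nat.card N)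
    (M : Type u) [AddCommGroup M] [Module k M] (ρ : Representation k G M)
    (htriv : ∀ x ∈ N, ρ x = 1) (n : ℕ) :
    Function.Bijective
      (cohomologyResMap (QuotientGroup.mk' N) (QuotientGroup.lift N ρ htriv) ρ
        (fun x => (QuotientGroup.lift_mk' N htriv x).symm) n) := by
  haveI : Fintype ↥N := Fintype.ofFinite ↥N
  have hc : (Fintype.card ↥N : k) ≠ 0 := fun h => hord (by
    rw [Nat.card_eq_fintype_card]
    exact (CharP.cast_eq_zero_iff k (ringChar k) _).mp h)
  exact inflation_general G N hc M ρ (QuotientGroup.lift N ρ htriv) (fun g => rfl) _ n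
end
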